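/- arXiv:2403.08394 — 6 statements merged into one kernel-verified Lean document; each statement's English description precedes it below -/
import Mathlib

section
/- Let H be a core-gadget graph on V ⊔ L ⊔ R with parameters N, d ≥ 3 and 0 < φ ≤ 1. Let S ⊆ V ⊔ L ⊔ R be a cut with |S ∩ (L ∪ R)| ≤ N and vol_H(S ∩ V) ≤ 4 · vol_H(S ∩ (L ∪ R)). Then e_H(S, (V ⊔ L ⊔ R) \ S) ≥ (φ/10) · vol_H(S). -/
open Finset

variable {W : Type*}

/-- The volume of a set of vertices: the sum of their degrees. -/
def vol (H : SimpleGraph W) [Fintype W] [DecidableRel H.Adj] (S : Finset W) : ℕ :=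
  ∑ v ∈ S, H.degree v

/-- The number of edges of `H` with one endpoint in `S` and the other in `T`
(for disjoint `S` and `T`), counted as ordered pairs in `S × T`. -/
def ecount (H : SimpleGraph W) [DecidableRel H.Adj] (S T : Finset W) : ℕ :=
  ((S ×ˢ T).filter fun p => H.Adj p.1 p.2).card

/-- `H` is a `φ`-expander: for every cut `∅ ≠ S ⊊ W`,
`min(vol(S), vol(Sᶜ)) > 0` and `e(S, Sᶜ) ≥ φ · min(vol(S), vol(Sᶜ))`. -/
def IsExpander [Fintype W] [DecidableEq W] (H : SimpleGraph W) [DecidableRel H.Adj]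
    (φ : ℝ) : Prop :=
  ∀ S : Finset W, S.Nonempty → S ≠ Finset.univ →
    0 < min (vol H S) (vol H Sᶜ) ∧
    φ * (min (vol H S) (vol H Sᶜ) : ℝ) ≤ (ecount H S Sᶜ : ℝ)

/-- A core-gadget graph on `V ⊔ L ⊔ R` with parameters `N`, `d ≥ 3` and `0 < φ ≤ 1`. -/
structure IsCoreGadget [Fintype W] [DecidableEq W] (H : SimpleGraph W) [DecidableRel H.Adj]
    (V L R : Finset W) (N d : ℕ) (φ : ℝ) : Prop where
  hLcard : L.card = N
  hRcard : R.card = N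
  hN : 1 ≤ N
  hd : 3 ≤ d
  hφ0 : 0 < φ
  hφ1 : φ ≤ 1
  hVL : Disjoint V L
  hVR : Disjoint V R
  hLR : Disjoint L R
  hcover : V ∪ L ∪ R = Finset.univ
  /-- (i) every edge lies inside `V`, between `V` and `L`, or between `L` and `R`. -/
  hedge : ∀ u v : W, H.Adj u v →
    (u ∈ V ∧ v ∈ V) ∨ (u ∈ V ∧ v ∈ L) ∨ (u ∈ L ∧ v ∈ V) ∨
    (u ∈ L ∧ v ∈ R) ∨ (u ∈ R ∧ v ∈ L)
  /-- (ii) every `v ∈ V` has exactly `deg_G(v) + 3` neighbors in `L`,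
  where `G` is the subgraph induced on `V`. -/
  hVtoL : ∀ v ∈ V, (H.neighborFinset v ∩ L).card = (H.neighborFinset v ∩ V).card + 3
  /-- (iii) every `x ∈ L` has at most `d` neighbors in `V`. -/
  hLtoV : ∀ x ∈ L, (H.neighborFinset x ∩ V).card ≤ d
  /-- (iv) the bipartite graph `X` of `L–R` edges is `d`-regular ... -/
  hXregL : ∀ x ∈ L, (H.neighborFinset x ∩ R).card = d
  hXregR : ∀ y ∈ R, (H.neighborFinset y ∩ L).card = d
  /-- ... and satisfies `e_X(T, (L∪R)\T) ≥ φ·d·|T|` for all `T ⊆ L ∪ R` with `|T| ≤ N`. -/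
  hXexp : ∀ T ⊆ L ∪ R, T.card ≤ N →
    φ * (d : ℝ) * (T.card : ℝ) ≤
      ((ecount H (T ∩ L) (R \ T) + ecount H (T ∩ R) (L \ T) : ℕ) : ℝ)

/-- Case one of the core-gadget lemma: for a cut `S` with `|S ∩ (L ∪ R)| ≤ N` and
`vol(S ∩ V) ≤ 4 · vol(S ∩ (L ∪ R))`, we have `e(S, Sᶜ) ≥ (φ/10) · vol(S)`. -/
theorem coreGadget_case_one [Fintype W] [DecidableEq W]
    (H : SimpleGraph W) [DecidableRel H.Adj]
    (V L R : Finset W) (N d : ℕ) (φ : ℝ)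
    (hcg : IsCoreGadget H V L R N d φ)
    (S : Finset W) (hSne : S.Nonempty) (hSuniv : S ≠ Finset.univ)
    (hScard : (S ∩ (L ∪ R)).card ≤ N)
    (hSvol : vol H (S ∩ V) ≤ 4 * vol H (S ∩ (L ∪ R))) :
    (φ / 10) * (vol H S : ℝ) ≤ (ecount H S Sᶜ : ℝ) := by
  classical
  obtain ⟨hLcard, hRcard, hN, hd, hφ0, hφ1, hVL, hVR, hLR, hcover, hedge, hVtoL,
    hLtoV, hXregL, hXregR, hXexp⟩ := hcg
  set T : Finset W := S ∩ (L ∪ R) with hT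
  -- split vol S
  have hdisjVT : Disjoint (S ∩ V) T := by
    refine Finset.disjoint_left.2 fun a ha hb => ?_
    have haV : a ∈ V := (Finset.mem_inter.1 ha).2
    rcases Finset.mem_union.1 (Finset.mem_inter.1 hb).2 with h | h
    · exact (Finset.disjoint_left.1 hVL haV) h
    · exact (Finset.disjoint_left.1 hVR haV) h
  have hunion : (S ∩ V) ∪ T = S := by
    rw [hT, ← Finset.inter_union_distrib_left, ← Finset.union_assoc, hcover,
      Finset.inter_univ]
  have hvolsplit : vol H S = vol H (S ∩ V) + vol H T := by
    unfold vol
    conv_lhs => rw [← hunion]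
    exact Finset.sum_union hdisjVT
  have h1 : vol H S ≤ 5 * vol H T := by
    rw [hvolsplit]; omega
  -- degree bound on L ∪ R
  have hdegLR : ∀ v ∈ L ∪ R, H.degree v ≤ 2 * d := by
    intro v hv
    rcases Finset.mem_union.1 hv with hvL | hvR
    · have hsub : H.neighborFinset v ⊆ V ∪ R := by
        intro u hu
        have hadj : H.Adj v u := by rwa [SimpleGraph.mem_neighborFinset] at hu
        rcases hedge v u hadj with ⟨h, _⟩ | ⟨h, _⟩ | ⟨_, h⟩ | ⟨_, h⟩ | ⟨h, _⟩
        · exact absurd hvL (Finset.disjoint_left.1 hVL h)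
        · exact absurd hvL (Finset.disjoint_left.1 hVL h)
        · exact Finset.mem_union_left _ h
        · exact Finset.mem_union_right _ h
        · exact absurd h (Finset.disjoint_left.1 hLR hvL)
      have heq : H.neighborFinset v = (H.neighborFinset v ∩ V) ∪ (H.neighborFinset v ∩ R) := by
        rw [← Finset.inter_union_distrib_left, Finset.inter_eq_left.2 hsub]
      calc H.degree v = (H.neighborFinset v).card := (H.card_neighborFinset_eq_degree v).symm
        _ = ((H.neighborFinset v ∩ V) ∪ (H.neighborFinset v ∩ R)).card := by rw [← heq]
        _ ≤ (H.neighborFinset v ∩ V).card + (H.neighborFinset v ∩ R).card :=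
            Finset.card_union_le _ _
        _ ≤ d + d := Nat.add_le_add (hLtoV v hvL) (le_of_eq (hXregL v hvL))
        _ = 2 * d := by ring
    · have hsub : H.neighborFinset v ⊆ L := by
        intro u hu
        have hadj : H.Adj v u := by rwa [SimpleGraph.mem_neighborFinset] at hu
        rcases hedge v u hadj with ⟨h, _⟩ | ⟨h, _⟩ | ⟨h, _⟩ | ⟨h, _⟩ | ⟨_, h⟩
        · exact absurd hvR (Finset.disjoint_left.1 hVR h)
        · exact absurd hvR (Finset.disjoint_left.1 hVR h)
        · exact absurd hvR (Finset.disjoint_left.1 hLR h)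
        · exact absurd hvR (Finset.disjoint_left.1 hLR h)
        · exact h
      calc H.degree v = (H.neighborFinset v).card := (H.card_neighborFinset_eq_degree v).symm
        _ = (H.neighborFinset v ∩ L).card := by rw [Finset.inter_eq_left.2 hsub]
        _ = d := hXregR v hvR
        _ ≤ 2 * d := by omega
  have hTsub : T ⊆ L ∪ R := Finset.inter_subset_right
  have h2 : vol H T ≤ T.card * (2 * d) := by
    rw [vol]
    calc ∑ v ∈ T, H.degree v ≤ ∑ _v ∈ T, 2 * d :=
          Finset.sum_le_sum fun v hv => hdegLR v (hTsub hv)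
      _ = T.card * (2 * d) := by rw [Finset.sum_const, smul_eq_mul]
  -- expansion
  have h3 := hXexp T hTsub hScard
  -- the X-cut edges are S–Sᶜ edges
  set A := ((T ∩ L) ×ˢ (R \ T)).filter (fun p => H.Adj p.1 p.2) with hA
  set B := ((T ∩ R) ×ˢ (L \ T)).filter (fun p => H.Adj p.1 p.2) with hB
  have hsubA : A ⊆ (S ×ˢ Sᶜ).filter (fun p => H.Adj p.1 p.2) := by
    intro p hp
    rw [hA, Finset.mem_filter, Finset.mem_product] at hp
    obtain ⟨⟨hp1, hp2⟩, hadj⟩ := hp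
    have hp1S : p.1 ∈ S := (Finset.mem_inter.1 ((Finset.mem_inter.1 hp1).1 : p.1 ∈ T)).1
    have hp2R : p.2 ∈ R := (Finset.mem_sdiff.1 hp2).1
    have hp2nT : p.2 ∉ T := (Finset.mem_sdiff.1 hp2).2
    rw [Finset.mem_filter, Finset.mem_product]
    refine ⟨⟨hp1S, Finset.mem_compl.2 fun hps => hp2nT ?_⟩, hadj⟩
    exact Finset.mem_inter.2 ⟨hps, Finset.mem_union_right _ hp2R⟩
  have hsubB : B ⊆ (S ×ˢ Sᶜ).filter (fun p => H.Adj p.1 p.2) := by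
    intro p hp
    rw [hB, Finset.mem_filter, Finset.mem_product] at hp
    obtain ⟨⟨hp1, hp2⟩, hadj⟩ := hp
    have hp1S : p.1 ∈ S := (Finset.mem_inter.1 ((Finset.mem_inter.1 hp1).1 : p.1 ∈ T)).1
    have hp2L : p.2 ∈ L := (Finset.mem_sdiff.1 hp2).1
    have hp2nT : p.2 ∉ T := (Finset.mem_sdiff.1 hp2).2
    rw [Finset.mem_filter, Finset.mem_product]
    refine ⟨⟨hp1S, Finset.mem_compl.2 fun hps => hp2nT ?_⟩, hadj⟩
    exact Finset.mem_inter.2 ⟨hps, Finset.mem_union_left _ hp2L⟩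
  have hdisjAB : Disjoint A B := by
    refine Finset.disjoint_left.2 fun p hpA hpB => ?_
    rw [hA, Finset.mem_filter, Finset.mem_product] at hpA
    rw [hB, Finset.mem_filter, Finset.mem_product] at hpB
    exact (Finset.disjoint_left.1 hLR (Finset.mem_inter.1 hpA.1.1).2)
      (Finset.mem_inter.1 hpB.1.1).2
  have h4 : ecount H (T ∩ L) (R \ T) + ecount H (T ∩ R) (L \ T) ≤ ecount H S Sᶜ := by
    have : ecount H (T ∩ L) (R \ T) + ecount H (T ∩ R) (L \ T) = (A ∪ B).card :=
      (Finset.card_union_of_disjoint hdisjAB).symm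
    rw [this, ecount]
    exact Finset.card_le_card (Finset.union_subset hsubA hsubB)
  -- arithmetic
  have c1 : (vol H S : ℝ) ≤ 5 * (vol H T : ℝ) := by exact_mod_cast h1
  have c2 : (vol H T : ℝ) ≤ (T.card : ℝ) * (2 * d) := by exact_mod_cast h2
  have c4 : ((ecount H (T ∩ L) (R \ T) + ecount H (T ∩ R) (L \ T) : ℕ) : ℝ)
      ≤ (ecount H S Sᶜ : ℝ) := by exact_mod_cast h4
  calc (φ / 10) * (vol H S : ℝ)
      ≤ (φ / 10) * (5 * (vol H T : ℝ)) :=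
        mul_le_mul_of_nonneg_left c1 (by positivity)
    _ = (φ / 2) * (vol H T : ℝ) := by ring
    _ ≤ (φ / 2) * ((T.card : ℝ) * (2 * d)) :=
        mul_le_mul_of_nonneg_left c2 (by positivity)
    _ = φ * (d : ℝ) * (T.card : ℝ) := by ring
    _ ≤ _ := le_trans h3 c4
end

section
/- Let H be a core-gadget graph on V ⊔ L ⊔ R with parameters N, d ≥ 3 and 0 < φ ≤ 1. Let S ⊆ V ⊔ L ⊔ R be a cut with vol_H(S ∩ V) > 4 · vol_H(S ∩ (L ∪ R)). Then e_H(S ∩ V, L \ S) ≥ vol_H(S)/5. -/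
open Finset

variable {W : Type*}

lemma ecount_eq_sum [Fintype W] [DecidableEq W] (H : SimpleGraph W) [DecidableRel H.Adj]
    (A B : Finset W) :
    ecount H A B = ∑ a ∈ A, (H.neighborFinset a ∩ B).card := by
  unfold ecount
  rw [Finset.card_filter, Finset.sum_product]
  refine Finset.sum_congr rfl fun a _ => ?_
  rw [← Finset.card_filter]
  congr 1
  ext b
  simp [SimpleGraph.mem_neighborFinset, and_comm]

lemma ecount_comm [Fintype W] [DecidableEq W] (H : SimpleGraph W) [DecidableRel H.Adj]
    (A B : Finset W) : ecount H A B = ecount H B A := by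
  unfold ecount
  rw [Finset.card_filter, Finset.card_filter, Finset.sum_product, Finset.sum_product,
    Finset.sum_comm]
  exact Finset.sum_congr rfl fun b _ => Finset.sum_congr rfl fun a _ =>
    if_congr (H.adj_comm a b) rfl rfl

lemma ecount_union_right [Fintype W] [DecidableEq W] (H : SimpleGraph W) [DecidableRel H.Adj]
    (A B C : Finset W) (h : Disjoint B C) :
    ecount H A (B ∪ C) = ecount H A B + ecount H A C := by
  simp only [ecount_eq_sum, Finset.inter_union_distrib_left]
  rw [← Finset.sum_add_distrib]
  refine Finset.sum_congr rfl fun a _ => ?_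
  exact Finset.card_union_of_disjoint (h.mono inf_le_right inf_le_right)

/-- Case two of the core-gadget lemma: for a cut `S` with
`vol(S ∩ V) > 4 · vol(S ∩ (L ∪ R))`, we have `e(S ∩ V, L \ S) ≥ vol(S)/5`. -/
theorem coreGadget_case_two [Fintype W] [DecidableEq W]
    (H : SimpleGraph W) [DecidableRel H.Adj]
    (V L R : Finset W) (N d : ℕ) (φ : ℝ)
    (hcg : IsCoreGadget H V L R N d φ)
    (S : Finset W) (hSne : S.Nonempty) (hSuniv : S ≠ Finset.univ)
    (hSvol : 4 * vol H (S ∩ (L ∪ R)) < vol H (S ∩ V)) :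
    (vol H S : ℝ) / 5 ≤ (ecount H (S ∩ V) (L \ S) : ℝ) := by
  classical
  -- abbreviations
  have hdisjVLR : Disjoint V (L ∪ R) := Finset.disjoint_union_right.mpr ⟨hcg.hVL, hcg.hVR⟩
  -- Step A : vol H S = vol (S∩V) + vol (S∩(L∪R))
  have hSsplit : (S ∩ V) ∪ (S ∩ (L ∪ R)) = S := by
    rw [← Finset.inter_union_distrib_left]
    have : V ∪ (L ∪ R) = Finset.univ := by
      rw [← Finset.union_assoc]; exact hcg.hcover
    rw [this, Finset.inter_univ]
  have hA : vol H S = vol H (S ∩ V) + vol H (S ∩ (L ∪ R)) := by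
    unfold vol
    conv_lhs => rw [← hSsplit]
    rw [Finset.sum_union (hdisjVLR.mono (Finset.inter_subset_right : S ∩ V ⊆ V) (Finset.inter_subset_right : S ∩ (L ∪ R) ⊆ L ∪ R))]
  -- Step B : vol (S∩V) ≤ 2 * ecount (S∩V) L
  have hB : vol H (S ∩ V) ≤ 2 * ecount H (S ∩ V) L := by
    rw [ecount_eq_sum, Finset.mul_sum]
    unfold vol
    refine Finset.sum_le_sum fun v hv => ?_
    have hvV : v ∈ V := (Finset.mem_inter.mp hv).2
    have hsub : H.neighborFinset v ⊆ V ∪ L := by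
      intro b hb
      rw [SimpleGraph.mem_neighborFinset] at hb
      rcases hcg.hedge v b hb with ⟨_, h⟩ | ⟨_, h⟩ | ⟨h, _⟩ | ⟨h, _⟩ | ⟨h, _⟩
      · exact Finset.mem_union_left _ h
      · exact Finset.mem_union_right _ h
      · exact absurd hvV (Finset.disjoint_left.mp hcg.hVL.symm h)
      · exact absurd hvV (Finset.disjoint_left.mp hcg.hVL.symm h)
      · exact absurd hvV (Finset.disjoint_left.mp hcg.hVR.symm h)
    have h1 : H.degree v ≤ (H.neighborFinset v ∩ V).card + (H.neighborFinset v ∩ L).card := by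
      calc H.degree v = (H.neighborFinset v).card := rfl
        _ = (H.neighborFinset v ∩ (V ∪ L)).card := by
            rw [Finset.inter_eq_left.mpr hsub]
        _ = ((H.neighborFinset v ∩ V) ∪ (H.neighborFinset v ∩ L)).card := by
            rw [Finset.inter_union_distrib_left]
        _ ≤ _ := Finset.card_union_le _ _
    have h2 := hcg.hVtoL v hvV
    omega
  -- Step C : split L into L \ S and L ∩ S
  have hC : ecount H (S ∩ V) L
      = ecount H (S ∩ V) (L \ S) + ecount H (S ∩ V) (L ∩ S) := by
    conv_lhs => rw [← Finset.sdiff_union_inter L S]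
    exact ecount_union_right H _ _ _
      (Finset.disjoint_sdiff_inter L S)
  -- Step D : ecount (S∩V) (L∩S) ≤ vol (S∩(L∪R))
  have hD : ecount H (S ∩ V) (L ∩ S) ≤ vol H (S ∩ (L ∪ R)) := by
    rw [ecount_comm, ecount_eq_sum]
    have h1 : ∑ x ∈ L ∩ S, (H.neighborFinset x ∩ (S ∩ V)).card
        ≤ ∑ x ∈ L ∩ S, H.degree x :=
      Finset.sum_le_sum fun x _ => Finset.card_le_card Finset.inter_subset_left
    refine h1.trans ?_
    unfold vol
    refine Finset.sum_le_sum_of_subset ?_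
    intro x hx
    rw [Finset.mem_inter] at hx ⊢
    exact ⟨hx.2, Finset.mem_union_left _ hx.1⟩
  -- conclude
  have key : vol H S ≤ 5 * ecount H (S ∩ V) (L \ S) := by omega
  rw [div_le_iff₀ (by norm_num : (0:ℝ) < 5)]
  calc (vol H S : ℝ) ≤ (5 * ecount H (S ∩ V) (L \ S) : ℕ) := by exact_mod_cast key
    _ = (ecount H (S ∩ V) (L \ S) : ℝ) * 5 := by push_cast; ring
end

section
/- Let G be a finite simple graph on vertex set V and let k ≥ 3 be an integer. Let Ḡ be any finite simple graph on vertex set V ⊔ V' ⊔ L ⊔ R, where V' = {v' : v ∈ V} is a disjoint copy of V, such that: the subgraph of Ḡ induced on V is G; the edges between V and V' are exactly {u v' : uv ∈ E(G)}; the sets V', L and R are each independent in Ḡ; there are no edges between V and L, between V and R, or between V' and R (edges between V' and L and between L and R are arbitrary). Then the number of k-cliques in Ḡ equals (k+1) times the number of k-cliques in G. -/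
open Finset

def gadgetf {V L R : Type} : (V ⊕ V ⊕ L ⊕ R) → Finset V
  | .inl v => {v}
  | .inr (.inl v) => {v}
  | _ => ∅

def gadgetF (L R : Type) {V : Type} [DecidableEq V] [DecidableEq L] [DecidableEq R] (T : Finset V) :
    Finset (Finset (V ⊕ V ⊕ L ⊕ R)) :=
  insert (T.image Sum.inl)
    (T.image fun v => insert (Sum.inr (Sum.inl v)) ((T.erase v).image Sum.inl))

lemma gadgetF_card {V L R : Type} [DecidableEq V] [DecidableEq L] [DecidableEq R]
    (T : Finset V) : (gadgetF L R T).card = T.card + 1 := by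
  rw [gadgetF, card_insert_of_notMem, card_image_of_injOn]
  · intro a ha b hb h
    have : (Sum.inr (Sum.inl a) : V ⊕ V ⊕ L ⊕ R) ∈
        insert (Sum.inr (Sum.inl b)) ((T.erase b).image Sum.inl) := by
      simp only at h; rw [← h]; exact mem_insert_self _ _
    simp at this
    exact this
  · intro h
    obtain ⟨v, hv, h⟩ := mem_image.mp h
    have : (Sum.inr (Sum.inl v) : V ⊕ V ⊕ L ⊕ R) ∈ T.image Sum.inl := by
      rw [← h]; exact mem_insert_self _ _
    simp at this

lemma gadget_recover {V L R : Type} [DecidableEq V] [DecidableEq L] [DecidableEq R]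
    {T : Finset V} {s : Finset (V ⊕ V ⊕ L ⊕ R)} (hs : s ∈ gadgetF L R T) :
    s.biUnion gadgetf = T := by
  rw [gadgetF, mem_insert] at hs
  rcases hs with h | h
  · subst h
    ext u
    simp [gadgetf]
  · obtain ⟨v, hv, h⟩ := mem_image.mp h
    subst h
    ext u
    simp only [mem_biUnion, mem_insert, mem_image]
    constructor
    · rintro ⟨x, hx | ⟨w, hw, rfl⟩, hux⟩
      · subst hx; simp [gadgetf] at hux; subst hux; exact hv
      · simp [gadgetf] at hux; subst hux; exact mem_of_mem_erase hw
    · intro hu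
      by_cases huv : u = v
      · exact ⟨Sum.inr (Sum.inl v), Or.inl rfl, by simp [gadgetf, huv]⟩
      · exact ⟨Sum.inl u, Or.inr ⟨u, mem_erase.mpr ⟨huv, hu⟩, rfl⟩, by simp [gadgetf]⟩

/-- Let `G` be a finite simple graph on `V` and `k ≥ 3`. Let `Ḡ` be any graph on
`V ⊔ V' ⊔ L ⊔ R` (with `V'` a disjoint copy of `V`) such that the induced subgraph on
`V` is `G`, the `V`–`V'` edges are exactly `{u v' : uv ∈ E(G)}`, the sets `V'`, `L`, `R`
are independent, and there are no `V`–`L`, `V`–`R` or `V'`–`R` edges (the `V'`–`L` and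
`L`–`R` edges are arbitrary). Then the number of `k`-cliques in `Ḡ` equals `(k+1)` times
the number of `k`-cliques in `G`. -/
theorem clique_count_gadget
    {V L R : Type} [Fintype V] [DecidableEq V] [Fintype L] [DecidableEq L]
    [Fintype R] [DecidableEq R]
    (G : SimpleGraph V) [DecidableRel G.Adj]
    (k : ℕ) (hk : 3 ≤ k)
    (Gbar : SimpleGraph (V ⊕ V ⊕ L ⊕ R)) [DecidableRel Gbar.Adj]
    -- the subgraph of Ḡ induced on V is G
    (hVV : ∀ u v : V, Gbar.Adj (.inl u) (.inl v) ↔ G.Adj u v)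
    -- the edges between V and V' are exactly {u v' : uv ∈ E(G)}
    (hVV' : ∀ u v : V, Gbar.Adj (.inl u) (.inr (.inl v)) ↔ G.Adj u v)
    -- V' is independent
    (hV'ind : ∀ u v : V, ¬ Gbar.Adj (.inr (.inl u)) (.inr (.inl v)))
    -- L is independent
    (hLind : ∀ x y : L, ¬ Gbar.Adj (.inr (.inr (.inl x))) (.inr (.inr (.inl y))))
    -- R is independent
    (hRind : ∀ x y : R, ¬ Gbar.Adj (.inr (.inr (.inr x))) (.inr (.inr (.inr y))))
    -- no edges between V and L
    (hVL : ∀ (v : V) (x : L), ¬ Gbar.Adj (.inl v) (.inr (.inr (.inl x))))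
    -- no edges between V and R
    (hVR : ∀ (v : V) (y : R), ¬ Gbar.Adj (.inl v) (.inr (.inr (.inr y))))
    -- no edges between V' and R
    (hV'R : ∀ (v : V) (y : R), ¬ Gbar.Adj (.inr (.inl v)) (.inr (.inr (.inr y)))) :
    (Gbar.cliqueFinset k).card = (k + 1) * (G.cliqueFinset k).card := by
  classical
  have key : Gbar.cliqueFinset k = (G.cliqueFinset k).biUnion (gadgetF L R) := by
    ext s
    simp only [SimpleGraph.mem_cliqueFinset_iff, mem_biUnion]
    constructor
    · intro hs
      have hcard3 : 3 ≤ s.card := hs.card_eq ▸ hk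
      -- no R vertices
      have hnoR : ∀ r : R, (Sum.inr (Sum.inr (Sum.inr r)) : V ⊕ V ⊕ L ⊕ R) ∉ s := by
        intro r hr
        have h2 : 1 < (s.erase (Sum.inr (Sum.inr (Sum.inr r)))).card := by
          have := card_erase_of_mem hr; omega
        obtain ⟨x, hx, y, hy, hxy⟩ := Finset.one_lt_card.mp h2
        have inL : ∀ z ∈ s.erase (Sum.inr (Sum.inr (Sum.inr r))),
            ∃ l : L, z = Sum.inr (Sum.inr (Sum.inl l)) := by
          intro z hz
          have hadj := hs.1 (mem_of_mem_erase hz) hr (ne_of_mem_erase hz)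
          rcases z with v | v | l | r'
          · exact absurd hadj (hVR v r)
          · exact absurd hadj (hV'R v r)
          · exact ⟨l, rfl⟩
          · exact absurd hadj (hRind r' r)
        obtain ⟨lx, rfl⟩ := inL x hx
        obtain ⟨ly, rfl⟩ := inL y hy
        exact hLind lx ly (hs.1 (mem_of_mem_erase hx) (mem_of_mem_erase hy) hxy)
      -- no L vertices
      have hnoL : ∀ l : L, (Sum.inr (Sum.inr (Sum.inl l)) : V ⊕ V ⊕ L ⊕ R) ∉ s := by
        intro l hl
        have h2 : 1 < (s.erase (Sum.inr (Sum.inr (Sum.inl l)))).card := by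
          have := card_erase_of_mem hl; omega
        obtain ⟨x, hx, y, hy, hxy⟩ := Finset.one_lt_card.mp h2
        have inV' : ∀ z ∈ s.erase (Sum.inr (Sum.inr (Sum.inl l))),
            ∃ v : V, z = Sum.inr (Sum.inl v) := by
          intro z hz
          have hadj := hs.1 (mem_of_mem_erase hz) hl (ne_of_mem_erase hz)
          rcases z with v | v | l' | r'
          · exact absurd hadj (hVL v l)
          · exact ⟨v, rfl⟩
          · exact absurd hadj (hLind l' l)
          · exact absurd (mem_of_mem_erase hz) (hnoR r')
        obtain ⟨vx, rfl⟩ := inV' x hx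
        obtain ⟨vy, rfl⟩ := inV' y hy
        exact hV'ind vx vy (hs.1 (mem_of_mem_erase hx) (mem_of_mem_erase hy) hxy)
      by_cases hex : ∃ v : V, (Sum.inr (Sum.inl v) : V ⊕ V ⊕ L ⊕ R) ∈ s
      · -- exactly one primed vertex v
        obtain ⟨v, hv⟩ := hex
        have hall : ∀ x ∈ s.erase (Sum.inr (Sum.inl v)), ∃ u : V, x = Sum.inl u := by
          intro x hx
          rcases x with u | u | l | r
          · exact ⟨u, rfl⟩
          · exfalso
            have hne : u ≠ v := by
              intro h; subst h; exact (ne_of_mem_erase hx) rfl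
            exact hV'ind u v (hs.1 (mem_of_mem_erase hx) hv (by simp [hne]))
          · exact absurd (mem_of_mem_erase hx) (hnoL l)
          · exact absurd (mem_of_mem_erase hx) (hnoR r)
        have hsub : s.erase (Sum.inr (Sum.inl v)) ⊆
            (Finset.univ : Finset V).image Sum.inl := by
          intro x hx
          obtain ⟨u, rfl⟩ := hall x hx
          simp
        obtain ⟨U, -, hU⟩ := Finset.subset_image_iff.mp hsub
        have hUcard : U.card = k - 1 := by
          have h0 := hs.card_eq
          have h1 := card_erase_of_mem hv
          have h2 : U.card = (s.erase (Sum.inr (Sum.inl v))).card := by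
            rw [← hU, card_image_of_injective _ Sum.inl_injective]
          omega
        have hvU : v ∉ U := by
          intro h
          have hvs : (Sum.inl v : V ⊕ V ⊕ L ⊕ R) ∈ s := by
            have : (Sum.inl v : V ⊕ V ⊕ L ⊕ R) ∈ U.image Sum.inl := mem_image_of_mem _ h
            rw [hU] at this
            exact mem_of_mem_erase this
          have := (hVV' v v).mp (hs.1 hvs hv (by simp))
          exact G.loopless.irrefl v this
        have hUs : ∀ u ∈ U, (Sum.inl u : V ⊕ V ⊕ L ⊕ R) ∈ s := by
          intro u hu
          have : (Sum.inl u : V ⊕ V ⊕ L ⊕ R) ∈ U.image Sum.inl := mem_image_of_mem _ hu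
          rw [hU] at this
          exact mem_of_mem_erase this
        refine ⟨insert v U, ?_, ?_⟩
        · constructor
          · intro a ha b hb hab
            simp only [coe_insert, Set.mem_insert_iff, mem_coe] at ha hb
            rcases ha with rfl | ha
            · rcases hb with rfl | hb
              · exact absurd rfl hab
              · exact ((hVV' b a).mp (hs.1 (hUs b hb) hv
                  (by simp))).symm
            · rcases hb with rfl | hb
              · exact (hVV' a b).mp (hs.1 (hUs a ha) hv (by simp))
              · exact (hVV a b).mp (hs.1 (hUs a ha) (hUs b hb) (by simp [hab]))
          · rw [card_insert_of_notMem hvU]; omega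
        · rw [gadgetF, mem_insert]
          right
          refine mem_image.mpr ⟨v, mem_insert_self _ _, ?_⟩
          rw [erase_insert hvU, hU, insert_erase hv]
      · -- all vertices unprimed
        push_neg at hex
        have hsub : s ⊆ (Finset.univ : Finset V).image Sum.inl := by
          intro x hx
          rcases x with u | u | l | r
          · simp
          · exact absurd hx (hex u)
          · exact absurd hx (hnoL l)
          · exact absurd hx (hnoR r)
        obtain ⟨U, -, hU⟩ := Finset.subset_image_iff.mp hsub
        refine ⟨U, ?_, ?_⟩
        · constructor
          · intro a ha b hb hab
            have ha' : (Sum.inl a : V ⊕ V ⊕ L ⊕ R) ∈ s := by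
              rw [← hU]; exact mem_image_of_mem _ ha
            have hb' : (Sum.inl b : V ⊕ V ⊕ L ⊕ R) ∈ s := by
              rw [← hU]; exact mem_image_of_mem _ hb
            exact (hVV a b).mp (hs.1 ha' hb' (by simp [hab]))
          · rw [← hs.card_eq, ← hU, card_image_of_injective _ Sum.inl_injective]
        · rw [gadgetF, mem_insert]
          exact Or.inl hU.symm
    · rintro ⟨T, hT, hsT⟩
      rw [gadgetF, mem_insert] at hsT
      rcases hsT with rfl | hsT
      · constructor
        · intro x hx y hy hxy
          simp only [coe_image, Set.mem_image, mem_coe] at hx hy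
          obtain ⟨a, ha, rfl⟩ := hx
          obtain ⟨b, hb, rfl⟩ := hy
          exact (hVV a b).mpr (hT.1 ha hb (by simpa using hxy))
        · rw [card_image_of_injective _ Sum.inl_injective, hT.card_eq]
      · obtain ⟨v, hv, rfl⟩ := mem_image.mp hsT
        constructor
        · intro x hx y hy hxy
          simp only [coe_insert, Set.mem_insert_iff, coe_image, Set.mem_image,
            mem_coe] at hx hy
          rcases hx with rfl | ⟨a, ha, rfl⟩
          · rcases hy with rfl | ⟨b, hb, rfl⟩
            · exact absurd rfl hxy
            · exact ((hVV' b v).mpr (hT.1 (mem_of_mem_erase hb) hv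
                (ne_of_mem_erase hb))).symm
          · rcases hy with rfl | ⟨b, hb, rfl⟩
            · exact (hVV' a v).mpr (hT.1 (mem_of_mem_erase ha) hv (ne_of_mem_erase ha))
            · exact (hVV a b).mpr (hT.1 (mem_of_mem_erase ha) (mem_of_mem_erase hb)
                (by simpa using hxy))
        · rw [card_insert_of_notMem (by simp), card_image_of_injective _
            Sum.inl_injective, card_erase_of_mem hv, hT.card_eq]
          omega
  rw [key, card_biUnion]
  · rw [Finset.sum_congr rfl (fun T hT => ?_), Finset.sum_const, smul_eq_mul, mul_comm]
    rw [gadgetF_card,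
      (SimpleGraph.mem_cliqueFinset_iff.mp hT).card_eq]
  · intro T hT T' hT' hne
    simp only [disjoint_left]
    intro s hs hs'
    exact hne ((gadget_recover hs).symm.trans (gadget_recover hs'))
end

section
/- Let G be a finite simple graph on vertex set V with no isolated vertices, and let Ḡ be a finite simple graph on vertex set V ⊔ V' ⊔ L ⊔ R, where V' = {v' : v ∈ V} is a disjoint copy of V and |L| = |R| = N ≥ 1, such that: the subgraph of Ḡ induced on V is G; the edges between V and V' are exactly {u v' : uv ∈ E(G)}; V', L and R are independent sets with no edges between V and L, between V and R, or between V' and R; every v' ∈ V' has exactly deg_G(v) + 3 neighbors in L; every x ∈ L has at most d neighbors in V'; and the bipartite graph X of L–R edges is d-regular for some integer d ≥ 3 and satisfies e_X(T, (L∪R)\T) ≥ φ·d·|T| for every T ⊆ L ∪ R with |T| ≤ N, where 0 < φ ≤ 1. Then there is a constant c > 0, depending only on φ, such that Ḡ is a c-expander. -/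
open Finset

variable {W : Type*}

section Aux
variable {α : Type*} [Fintype α] [DecidableEq α] (H : SimpleGraph α) [DecidableRel H.Adj]

lemma ecount_eq_sum_s6 (S T : Finset α) :
    ecount H S T = ∑ x ∈ S, (H.neighborFinset x ∩ T).card := by
  unfold ecount
  rw [Finset.card_filter, Finset.sum_product]
  refine Finset.sum_congr rfl fun x hx => ?_
  rw [← Finset.card_filter]
  congr 1
  ext y
  simp [SimpleGraph.mem_neighborFinset, and_comm]

omit [Fintype α] [DecidableEq α] in
lemma ecount_comm_s6 (S T : Finset α) : ecount H S T = ecount H T S := by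
  unfold ecount
  rw [Finset.card_filter, Finset.card_filter, Finset.sum_product, Finset.sum_product]
  rw [Finset.sum_comm]
  exact Finset.sum_congr rfl fun y _ => Finset.sum_congr rfl fun x _ =>
    if_congr (H.adj_comm _ _) rfl rfl

lemma ecount_mono_right {T T' : Finset α} (S : Finset α) (h : T ⊆ T') :
    ecount H S T ≤ ecount H S T' := by
  rw [ecount_eq_sum_s6, ecount_eq_sum_s6]
  exact Finset.sum_le_sum fun x _ =>
    Finset.card_le_card (Finset.inter_subset_inter_left h)

lemma ecount_mono_left {S S' : Finset α} (T : Finset α) (h : S ⊆ S') :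
    ecount H S T ≤ ecount H S' T := by
  rw [ecount_eq_sum_s6, ecount_eq_sum_s6]
  exact Finset.sum_le_sum_of_subset h

lemma ecount_union_left {S S' : Finset α} (T : Finset α) (h : Disjoint S S') :
    ecount H (S ∪ S') T = ecount H S T + ecount H S' T := by
  rw [ecount_eq_sum_s6, ecount_eq_sum_s6, ecount_eq_sum_s6, Finset.sum_union h]

lemma ecount_union_right_s6 {T T' : Finset α} (S : Finset α) (h : Disjoint T T') :
    ecount H S (T ∪ T') = ecount H S T + ecount H S T' := by
  rw [ecount_eq_sum_s6, ecount_eq_sum_s6, ecount_eq_sum_s6, ← Finset.sum_add_distrib]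
  refine Finset.sum_congr rfl fun x _ => ?_
  rw [Finset.inter_union_distrib_left,
    Finset.card_union_of_disjoint (h.mono inter_subset_right inter_subset_right)]

lemma nbr_inter_eq_empty (w : α) (X : Finset α) (h : ∀ x ∈ X, ¬ H.Adj w x) :
    H.neighborFinset w ∩ X = ∅ := by
  refine Finset.eq_empty_of_forall_notMem fun x hx => ?_
  rw [Finset.mem_inter, SimpleGraph.mem_neighborFinset] at hx
  exact h x hx.2 hx.1

lemma degree_decomp (V V' L R : Finset α)
    (hVV' : Disjoint V V') (hVL : Disjoint V L) (hVR : Disjoint V R)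
    (hV'L : Disjoint V' L) (hV'R : Disjoint V' R) (hLR : Disjoint L R)
    (huniv : V ∪ V' ∪ L ∪ R = Finset.univ) (w : α) :
    H.degree w = (H.neighborFinset w ∩ V).card + (H.neighborFinset w ∩ V').card
      + (H.neighborFinset w ∩ L).card + (H.neighborFinset w ∩ R).card := by
  have hnb : H.neighborFinset w = (H.neighborFinset w ∩ V) ∪ (H.neighborFinset w ∩ V')
      ∪ (H.neighborFinset w ∩ L) ∪ (H.neighborFinset w ∩ R) := by
    rw [← Finset.inter_union_distrib_left, ← Finset.inter_union_distrib_left,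
      ← Finset.inter_union_distrib_left, huniv, Finset.inter_univ]
  have d1 : Disjoint (H.neighborFinset w ∩ V) (H.neighborFinset w ∩ V') :=
    hVV'.mono inter_subset_right inter_subset_right
  have d2 : Disjoint (H.neighborFinset w ∩ V ∪ H.neighborFinset w ∩ V')
      (H.neighborFinset w ∩ L) :=
    Finset.disjoint_union_left.mpr
      ⟨hVL.mono inter_subset_right inter_subset_right,
       hV'L.mono inter_subset_right inter_subset_right⟩
  have d3 : Disjoint (H.neighborFinset w ∩ V ∪ H.neighborFinset w ∩ V'
      ∪ H.neighborFinset w ∩ L) (H.neighborFinset w ∩ R) :=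
    Finset.disjoint_union_left.mpr
      ⟨Finset.disjoint_union_left.mpr
        ⟨hVR.mono inter_subset_right inter_subset_right,
         hV'R.mono inter_subset_right inter_subset_right⟩,
       hLR.mono inter_subset_right inter_subset_right⟩
  rw [← SimpleGraph.card_neighborFinset_eq_degree]
  conv_lhs => rw [hnb]
  rw [Finset.card_union_of_disjoint d3, Finset.card_union_of_disjoint d2,
    Finset.card_union_of_disjoint d1]

end Aux

lemma key_bound
    {α : Type} [Fintype α] [DecidableEq α]
    (Gbar : SimpleGraph α) [DecidableRel Gbar.Adj]
    (V V' L R : Finset α) (cp : α → α) (N d : ℕ) (φ : ℝ)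
    (hd : 3 ≤ d) (hφ : 0 < φ) (hφ1 : φ ≤ 1)
    (hVV' : Disjoint V V') (hVL : Disjoint V L) (hVR : Disjoint V R)
    (hV'L : Disjoint V' L) (hV'R : Disjoint V' R) (hLR : Disjoint L R)
    (huniv : V ∪ V' ∪ L ∪ R = Finset.univ)
    (hcp1 : ∀ v ∈ V, cp v ∈ V')
    (hcp2 : ∀ u ∈ V, ∀ v ∈ V, cp u = cp v → u = v)
    (hcp3 : ∀ w ∈ V', ∃ v ∈ V, cp v = w)
    (hcopy : ∀ u ∈ V, ∀ v ∈ V, (Gbar.Adj u (cp v) ↔ Gbar.Adj u v))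
    (hindV' : ∀ u ∈ V', ∀ v ∈ V', ¬ Gbar.Adj u v)
    (hindL : ∀ x ∈ L, ∀ y ∈ L, ¬ Gbar.Adj x y)
    (hindR : ∀ x ∈ R, ∀ y ∈ R, ¬ Gbar.Adj x y)
    (hVLe : ∀ u ∈ V, ∀ x ∈ L, ¬ Gbar.Adj u x)
    (hVRe : ∀ u ∈ V, ∀ y ∈ R, ¬ Gbar.Adj u y)
    (hV'Re : ∀ u ∈ V', ∀ y ∈ R, ¬ Gbar.Adj u y)
    (hdegL : ∀ v ∈ V, (Gbar.neighborFinset (cp v) ∩ L).card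
        = (Gbar.neighborFinset v ∩ V).card + 3)
    (hLV' : ∀ x ∈ L, (Gbar.neighborFinset x ∩ V').card ≤ d)
    (hLd : ∀ x ∈ L, (Gbar.neighborFinset x ∩ R).card = d)
    (hRd : ∀ y ∈ R, (Gbar.neighborFinset y ∩ L).card = d)
    (hexp : ∀ T ⊆ L ∪ R, T.card ≤ N →
      φ * (d : ℝ) * (T.card : ℝ) ≤
        ((ecount Gbar (T ∩ L) (R \ T) + ecount Gbar (T ∩ R) (L \ T) : ℕ) : ℝ))
    (S : Finset α) (hS : (S ∩ (L ∪ R)).card ≤ N) :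
    φ * (vol Gbar S : ℝ) ≤ 6 * (ecount Gbar S Sᶜ : ℝ) := by
  classical
  -- notation
  set B : Finset α := V.filter (fun v => cp v ∈ S) with hBdef
  have hBsubV : B ⊆ V := Finset.filter_subset _ _
  -- degree decomposition
  have hdeg := degree_decomp Gbar V V' L R hVV' hVL hVR hV'L hV'R hLR huniv
  -- copies of neighborhoods
  have hNcpV : ∀ v ∈ V, Gbar.neighborFinset (cp v) ∩ V = Gbar.neighborFinset v ∩ V := by
    intro v hv
    ext u
    simp only [Finset.mem_inter, SimpleGraph.mem_neighborFinset]
    constructor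
    · rintro ⟨h1, h2⟩
      exact ⟨(Gbar.adj_comm _ _).mp ((hcopy u h2 v hv).mp ((Gbar.adj_comm _ _).mp h1)), h2⟩
    · rintro ⟨h1, h2⟩
      exact ⟨(Gbar.adj_comm _ _).mp ((hcopy u h2 v hv).mpr ((Gbar.adj_comm _ _).mp h1)), h2⟩
  have hNVV' : ∀ v ∈ V, (Gbar.neighborFinset v ∩ V').card
      = (Gbar.neighborFinset v ∩ V).card := by
    intro v hv
    refine (Finset.card_bij (fun u _ => cp u) ?_ ?_ ?_).symm
    · intro u hu
      rw [Finset.mem_inter, SimpleGraph.mem_neighborFinset] at hu ⊢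
      exact ⟨(hcopy v hv u hu.2).mpr hu.1, hcp1 u hu.2⟩
    · intro u hu u' hu'
      exact hcp2 u (Finset.mem_inter.mp hu).2 u' (Finset.mem_inter.mp hu').2
    · intro w hw
      rw [Finset.mem_inter, SimpleGraph.mem_neighborFinset] at hw
      obtain ⟨u, hu, rfl⟩ := hcp3 w hw.2
      refine ⟨u, ?_, rfl⟩
      rw [Finset.mem_inter, SimpleGraph.mem_neighborFinset]
      exact ⟨(hcopy v hv u hu).mp hw.1, hu⟩
  -- degree formulas
  have hdegV : ∀ v ∈ V, Gbar.degree v = 2 * (Gbar.neighborFinset v ∩ V).card := by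
    intro v hv
    rw [hdeg v, hNVV' v hv,
      nbr_inter_eq_empty Gbar v L (fun x hx => hVLe v hv x hx),
      nbr_inter_eq_empty Gbar v R (fun y hy => hVRe v hv y hy)]
    simp; ring
  have hdegV' : ∀ v ∈ V, Gbar.degree (cp v) = 2 * (Gbar.neighborFinset v ∩ V).card + 3 := by
    intro v hv
    rw [hdeg (cp v), hNcpV v hv,
      nbr_inter_eq_empty Gbar (cp v) V' (fun x hx => hindV' (cp v) (hcp1 v hv) x hx),
      nbr_inter_eq_empty Gbar (cp v) R (fun y hy => hV'Re (cp v) (hcp1 v hv) y hy),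
      hdegL v hv]
    simp; ring
  have hdegLx : ∀ x ∈ L, Gbar.degree x ≤ 2 * d := by
    intro x hx
    rw [hdeg x,
      nbr_inter_eq_empty Gbar x V (fun u hu => fun h => hVLe u hu x hx h.symm),
      nbr_inter_eq_empty Gbar x L (fun y hy => hindL x hx y hy),
      hLd x hx]
    have := hLV' x hx
    simp
    omega
  have hdegR : ∀ y ∈ R, Gbar.degree y = d := by
    intro y hy
    rw [hdeg y,
      nbr_inter_eq_empty Gbar y V (fun u hu => fun h => hVRe u hu y hy h.symm),
      nbr_inter_eq_empty Gbar y V' (fun u hu => fun h => hV'Re u hu y hy h.symm),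
      nbr_inter_eq_empty Gbar y R (fun z hz => hindR y hy z hz),
      hRd y hy]
    simp
  -- splitting S
  have hSsplit : S = (S ∩ V) ∪ (S ∩ V') ∪ (S ∩ L) ∪ (S ∩ R) := by
    rw [← Finset.inter_union_distrib_left, ← Finset.inter_union_distrib_left,
      ← Finset.inter_union_distrib_left, huniv, Finset.inter_univ]
  have djSS : ∀ {X Y : Finset α}, Disjoint X Y → Disjoint (S ∩ X) (S ∩ Y) :=
    fun h => h.mono inter_subset_right inter_subset_right
  have dj1 : Disjoint (S ∩ V) (S ∩ V') := djSS hVV'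
  have dj2 : Disjoint ((S ∩ V) ∪ (S ∩ V')) (S ∩ L) :=
    Finset.disjoint_union_left.mpr ⟨djSS hVL, djSS hV'L⟩
  have dj3 : Disjoint ((S ∩ V) ∪ (S ∩ V') ∪ (S ∩ L)) (S ∩ R) :=
    Finset.disjoint_union_left.mpr
      ⟨Finset.disjoint_union_left.mpr ⟨djSS hVR, djSS hV'R⟩, djSS hLR⟩
  have hBim : S ∩ V' = B.image cp := by
    ext w
    simp only [Finset.mem_image, Finset.mem_inter, hBdef, Finset.mem_filter]
    constructor
    · rintro ⟨hwS, hwV'⟩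
      obtain ⟨v, hv, rfl⟩ := hcp3 w hwV'
      exact ⟨v, ⟨hv, hwS⟩, rfl⟩
    · rintro ⟨v, ⟨hv, hvS⟩, rfl⟩
      exact ⟨hvS, hcp1 v hv⟩
  have hBinj : ∀ x ∈ B, ∀ y ∈ B, cp x = cp y → x = y :=
    fun x hx y hy => hcp2 x (hBsubV hx) y (hBsubV hy)
  -- volumes
  have hvolsplit : vol Gbar S = vol Gbar (S ∩ V) + vol Gbar (S ∩ V')
      + vol Gbar (S ∩ L) + vol Gbar (S ∩ R) := by
    unfold vol
    conv_lhs => rw [hSsplit]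
    rw [Finset.sum_union dj3, Finset.sum_union dj2, Finset.sum_union dj1]
  have hvolA : vol Gbar (S ∩ V)
      = 2 * ∑ v ∈ S ∩ V, (Gbar.neighborFinset v ∩ V).card := by
    unfold vol
    rw [Finset.mul_sum]
    exact Finset.sum_congr rfl fun v hv => hdegV v (Finset.mem_inter.mp hv).2
  have hvolB : vol Gbar (S ∩ V')
      = 2 * (∑ v ∈ B, (Gbar.neighborFinset v ∩ V).card) + 3 * B.card := by
    unfold vol
    rw [hBim, Finset.sum_image hBinj,
      Finset.sum_congr rfl fun v hv => hdegV' v (hBsubV hv),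
      Finset.sum_add_distrib, Finset.sum_const, ← Finset.mul_sum, smul_eq_mul,
      mul_comm B.card 3]
  have hvolL : vol Gbar (S ∩ L) ≤ 2 * d * (S ∩ L).card := by
    unfold vol
    calc ∑ v ∈ S ∩ L, Gbar.degree v ≤ ∑ v ∈ S ∩ L, 2 * d :=
          Finset.sum_le_sum fun v hv => hdegLx v (Finset.mem_inter.mp hv).2
    _ = 2 * d * (S ∩ L).card := by rw [Finset.sum_const, smul_eq_mul, mul_comm]
  have hvolR : vol Gbar (S ∩ R) = d * (S ∩ R).card := by
    unfold vol
    calc ∑ v ∈ S ∩ R, Gbar.degree v = ∑ v ∈ S ∩ R, d :=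
          Finset.sum_congr rfl fun v hv => hdegR v (Finset.mem_inter.mp hv).2
    _ = d * (S ∩ R).card := by rw [Finset.sum_const, smul_eq_mul, mul_comm]
  -- step 3 : a ≤ b + e11 + e12
  have hsubA : S ∩ V ⊆ V := inter_subset_right
  have h31 : ∑ v ∈ S ∩ V, (Gbar.neighborFinset v ∩ V).card = ecount Gbar (S ∩ V) V :=
    (ecount_eq_sum_s6 Gbar _ _).symm
  have h32 : ecount Gbar (S ∩ V) V
      = ecount Gbar (S ∩ V) (V \ (S ∩ V)) + ecount Gbar (S ∩ V) (S ∩ V) := by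
    have h := ecount_union_right_s6 Gbar (S ∩ V)
      (Finset.sdiff_disjoint (s := S ∩ V) (t := V))
    rw [Finset.sdiff_union_of_subset hsubA] at h
    exact h
  have hdjB : Disjoint ((S ∩ V) ∩ B) ((S ∩ V) \ B) :=
    Finset.disjoint_left.mpr fun x h1 h2 =>
      (Finset.mem_sdiff.mp h2).2 (Finset.mem_inter.mp h1).2
  have h33 : ecount Gbar (S ∩ V) (S ∩ V)
      = ecount Gbar (S ∩ V) ((S ∩ V) ∩ B) + ecount Gbar (S ∩ V) ((S ∩ V) \ B) := by
    have hid : ((S ∩ V) ∩ B) ∪ ((S ∩ V) \ B) = S ∩ V := by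
      ext x; simp only [Finset.mem_union, Finset.mem_inter, Finset.mem_sdiff]; tauto
    have h := ecount_union_right_s6 Gbar (S ∩ V) hdjB
    rw [hid] at h
    exact h
  have h34 : ecount Gbar (S ∩ V) ((S ∩ V) ∩ B)
      ≤ ∑ v ∈ B, (Gbar.neighborFinset v ∩ V).card := by
    calc ecount Gbar (S ∩ V) ((S ∩ V) ∩ B) = ecount Gbar ((S ∩ V) ∩ B) (S ∩ V) :=
          ecount_comm_s6 Gbar _ _
    _ ≤ ecount Gbar ((S ∩ V) ∩ B) V := ecount_mono_right Gbar _ hsubA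
    _ = ∑ v ∈ (S ∩ V) ∩ B, (Gbar.neighborFinset v ∩ V).card := ecount_eq_sum_s6 Gbar _ _
    _ ≤ ∑ v ∈ B, (Gbar.neighborFinset v ∩ V).card :=
          Finset.sum_le_sum_of_subset inter_subset_right
  have h35 : ecount Gbar (S ∩ V) ((S ∩ V) \ B)
      ≤ ecount Gbar (S ∩ V) (V' \ (S ∩ V')) := by
    rw [ecount_eq_sum_s6, ecount_eq_sum_s6]
    refine Finset.sum_le_sum fun x hx => ?_
    have hxV : x ∈ V := hsubA hx
    refine Finset.card_le_card_of_injOn cp ?_ ?_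
    · intro v hv
      obtain ⟨hadj, hv2⟩ := Finset.mem_inter.mp hv
      rw [SimpleGraph.mem_neighborFinset] at hadj
      obtain ⟨hvSV, hvnB⟩ := Finset.mem_sdiff.mp hv2
      have hvV : v ∈ V := (Finset.mem_inter.mp hvSV).2
      have hcpS : cp v ∉ S := fun h => hvnB (Finset.mem_filter.mpr ⟨hvV, h⟩)
      rw [Finset.mem_coe, Finset.mem_inter, SimpleGraph.mem_neighborFinset, Finset.mem_sdiff]
      exact ⟨(hcopy x hxV v hvV).mpr hadj, hcp1 v hvV,
        fun h => hcpS (Finset.mem_inter.mp h).1⟩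
    · intro u hu v hv h
      have huV : u ∈ V := (Finset.mem_inter.mp
        (Finset.mem_sdiff.mp (Finset.mem_inter.mp (Finset.mem_coe.mp hu)).2).1).2
      have hvV : v ∈ V := (Finset.mem_inter.mp
        (Finset.mem_sdiff.mp (Finset.mem_inter.mp (Finset.mem_coe.mp hv)).2).1).2
      exact hcp2 u huV v hvV h
  have step3 : ∑ v ∈ S ∩ V, (Gbar.neighborFinset v ∩ V).card
      ≤ (∑ v ∈ B, (Gbar.neighborFinset v ∩ V).card)
        + ecount Gbar (S ∩ V) (V \ (S ∩ V)) + ecount Gbar (S ∩ V) (V' \ (S ∩ V')) := by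
    omega
  -- step 2 : b + 3m ≤ e2 + d p
  have hsubP : S ∩ L ⊆ L := inter_subset_right
  have h21 : ecount Gbar (S ∩ V') L
      = (∑ v ∈ B, (Gbar.neighborFinset v ∩ V).card) + 3 * B.card := by
    rw [ecount_eq_sum_s6, hBim, Finset.sum_image hBinj,
      Finset.sum_congr rfl fun v hv => hdegL v (hBsubV hv),
      Finset.sum_add_distrib, Finset.sum_const, smul_eq_mul, mul_comm B.card 3]
  have h22 : ecount Gbar (S ∩ V') L
      = ecount Gbar (S ∩ V') (L \ (S ∩ L)) + ecount Gbar (S ∩ V') (S ∩ L) := by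
    have h := ecount_union_right_s6 Gbar (S ∩ V')
      (Finset.sdiff_disjoint (s := S ∩ L) (t := L))
    rw [Finset.sdiff_union_of_subset hsubP] at h
    exact h
  have h23 : ecount Gbar (S ∩ V') (S ∩ L) ≤ d * (S ∩ L).card := by
    calc ecount Gbar (S ∩ V') (S ∩ L) ≤ ecount Gbar V' (S ∩ L) :=
          ecount_mono_left Gbar _ inter_subset_right
    _ = ecount Gbar (S ∩ L) V' := ecount_comm_s6 Gbar _ _
    _ = ∑ x ∈ S ∩ L, (Gbar.neighborFinset x ∩ V').card := ecount_eq_sum_s6 Gbar _ _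
    _ ≤ ∑ x ∈ S ∩ L, d := Finset.sum_le_sum fun x hx => hLV' x (Finset.mem_inter.mp hx).2
    _ = d * (S ∩ L).card := by rw [Finset.sum_const, smul_eq_mul, mul_comm]
  have step2 : (∑ v ∈ B, (Gbar.neighborFinset v ∩ V).card) + 3 * B.card
      ≤ ecount Gbar (S ∩ V') (L \ (S ∩ L)) + d * (S ∩ L).card := by
    rw [← h21, h22]
    exact Nat.add_le_add_left h23 _
  -- step 4 : the five pieces are part of the cut
  have hcX : ∀ X : Finset α, X \ (S ∩ X) ⊆ Sᶜ := by
    intro X x hx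
    obtain ⟨hx1, hx2⟩ := Finset.mem_sdiff.mp hx
    rw [Finset.mem_compl]
    exact fun hxS => hx2 (Finset.mem_inter.mpr ⟨hxS, hx1⟩)
  have h41 : ecount Gbar S Sᶜ = ecount Gbar (S ∩ V) Sᶜ + ecount Gbar (S ∩ V') Sᶜ
      + ecount Gbar (S ∩ L) Sᶜ + ecount Gbar (S ∩ R) Sᶜ := by
    have h : ecount Gbar ((S ∩ V) ∪ (S ∩ V') ∪ (S ∩ L) ∪ (S ∩ R)) Sᶜ
        = ecount Gbar (S ∩ V) Sᶜ + ecount Gbar (S ∩ V') Sᶜ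
          + ecount Gbar (S ∩ L) Sᶜ + ecount Gbar (S ∩ R) Sᶜ := by
      rw [ecount_union_left Gbar _ dj3, ecount_union_left Gbar _ dj2,
        ecount_union_left Gbar _ dj1]
    rw [← hSsplit] at h
    exact h
  have h42 : ecount Gbar (S ∩ V) (V \ (S ∩ V)) + ecount Gbar (S ∩ V) (V' \ (S ∩ V'))
      ≤ ecount Gbar (S ∩ V) Sᶜ := by
    have hdj : Disjoint (V \ (S ∩ V)) (V' \ (S ∩ V')) :=
      hVV'.mono Finset.sdiff_subset Finset.sdiff_subset
    calc ecount Gbar (S ∩ V) (V \ (S ∩ V)) + ecount Gbar (S ∩ V) (V' \ (S ∩ V'))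
        = ecount Gbar (S ∩ V) ((V \ (S ∩ V)) ∪ (V' \ (S ∩ V'))) :=
          (ecount_union_right_s6 Gbar _ hdj).symm
    _ ≤ ecount Gbar (S ∩ V) Sᶜ :=
          ecount_mono_right Gbar _ (Finset.union_subset (hcX V) (hcX V'))
  have h43 : ecount Gbar (S ∩ V') (L \ (S ∩ L)) ≤ ecount Gbar (S ∩ V') Sᶜ :=
    ecount_mono_right Gbar _ (hcX L)
  have h44 : ecount Gbar (S ∩ L) (R \ (S ∩ R)) ≤ ecount Gbar (S ∩ L) Sᶜ :=
    ecount_mono_right Gbar _ (hcX R)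
  have h45 : ecount Gbar (S ∩ R) (L \ (S ∩ L)) ≤ ecount Gbar (S ∩ R) Sᶜ :=
    ecount_mono_right Gbar _ (hcX L)
  have step4 : ecount Gbar (S ∩ V) (V \ (S ∩ V)) + ecount Gbar (S ∩ V) (V' \ (S ∩ V'))
      + ecount Gbar (S ∩ V') (L \ (S ∩ L)) + ecount Gbar (S ∩ L) (R \ (S ∩ R))
      + ecount Gbar (S ∩ R) (L \ (S ∩ L)) ≤ ecount Gbar S Sᶜ := by
    omega
  -- step 5 : expansion of X
  have hTL : (S ∩ (L ∪ R)) ∩ L = S ∩ L := by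
    ext x
    simp only [Finset.mem_inter, Finset.mem_union]
    tauto
  have hTR : (S ∩ (L ∪ R)) ∩ R = S ∩ R := by
    ext x
    simp only [Finset.mem_inter, Finset.mem_union]
    tauto
  have hRT : R \ (S ∩ (L ∪ R)) = R \ (S ∩ R) := by
    ext x
    simp only [Finset.mem_sdiff, Finset.mem_inter, Finset.mem_union]
    tauto
  have hLT : L \ (S ∩ (L ∪ R)) = L \ (S ∩ L) := by
    ext x
    simp only [Finset.mem_sdiff, Finset.mem_inter, Finset.mem_union]
    tauto
  have hTcard : (S ∩ (L ∪ R)).card = (S ∩ L).card + (S ∩ R).card := by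
    rw [Finset.inter_union_distrib_left, Finset.card_union_of_disjoint (djSS hLR)]
  have step5 := hexp (S ∩ (L ∪ R)) inter_subset_right hS
  rw [hTL, hTR, hRT, hLT, hTcard] at step5
  -- assemble everything over ℝ
  have hvolN : vol Gbar S ≤ 2 * (∑ v ∈ S ∩ V, (Gbar.neighborFinset v ∩ V).card)
      + (2 * (∑ v ∈ B, (Gbar.neighborFinset v ∩ V).card) + 3 * B.card)
      + 2 * d * (S ∩ L).card + d * (S ∩ R).card := by
    rw [hvolsplit, hvolA, hvolB, hvolR]
    omega
  have c1 : (vol Gbar S : ℝ) ≤ 2 * (∑ v ∈ S ∩ V, (Gbar.neighborFinset v ∩ V).card : ℕ)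
      + (2 * ((∑ v ∈ B, (Gbar.neighborFinset v ∩ V).card : ℕ)) + 3 * (B.card : ℝ))
      + 2 * d * ((S ∩ L).card : ℝ) + d * ((S ∩ R).card : ℝ) := by
    exact_mod_cast hvolN
  have c2 : ((∑ v ∈ B, (Gbar.neighborFinset v ∩ V).card : ℕ) : ℝ) + 3 * (B.card : ℝ)
      ≤ (ecount Gbar (S ∩ V') (L \ (S ∩ L)) : ℝ) + d * ((S ∩ L).card : ℝ) := by
    exact_mod_cast step2
  have c3 : ((∑ v ∈ S ∩ V, (Gbar.neighborFinset v ∩ V).card : ℕ) : ℝ)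
      ≤ ((∑ v ∈ B, (Gbar.neighborFinset v ∩ V).card : ℕ) : ℝ)
        + (ecount Gbar (S ∩ V) (V \ (S ∩ V)) : ℝ)
        + (ecount Gbar (S ∩ V) (V' \ (S ∩ V')) : ℝ) := by
    exact_mod_cast step3
  have c4 : (ecount Gbar (S ∩ V) (V \ (S ∩ V)) : ℝ)
      + (ecount Gbar (S ∩ V) (V' \ (S ∩ V')) : ℝ)
      + (ecount Gbar (S ∩ V') (L \ (S ∩ L)) : ℝ)
      + (ecount Gbar (S ∩ L) (R \ (S ∩ R)) : ℝ)
      + (ecount Gbar (S ∩ R) (L \ (S ∩ L)) : ℝ) ≤ (ecount Gbar S Sᶜ : ℝ) := by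
    exact_mod_cast step4
  have c5 : φ * (d : ℝ) * (((S ∩ L).card : ℝ) + ((S ∩ R).card : ℝ))
      ≤ (ecount Gbar (S ∩ L) (R \ (S ∩ R)) : ℝ)
        + (ecount Gbar (S ∩ R) (L \ (S ∩ L)) : ℝ) := by
    have := step5
    push_cast at this
    linarith
  have q1 : φ * (ecount Gbar (S ∩ V) (V \ (S ∩ V)) : ℝ)
      ≤ (ecount Gbar (S ∩ V) (V \ (S ∩ V)) : ℝ) :=
    mul_le_of_le_one_left (Nat.cast_nonneg _) hφ1
  have q2 : φ * (ecount Gbar (S ∩ V) (V' \ (S ∩ V')) : ℝ)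
      ≤ (ecount Gbar (S ∩ V) (V' \ (S ∩ V')) : ℝ) :=
    mul_le_of_le_one_left (Nat.cast_nonneg _) hφ1
  have q3 : φ * (ecount Gbar (S ∩ V') (L \ (S ∩ L)) : ℝ)
      ≤ (ecount Gbar (S ∩ V') (L \ (S ∩ L)) : ℝ) :=
    mul_le_of_le_one_left (Nat.cast_nonneg _) hφ1
  have n1 : (0:ℝ) ≤ φ * (B.card : ℝ) := mul_nonneg hφ.le (Nat.cast_nonneg _)
  have n2 : (0:ℝ) ≤ φ * ((d:ℝ) * ((S ∩ R).card : ℝ)) :=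
    mul_nonneg hφ.le (mul_nonneg (Nat.cast_nonneg _) (Nat.cast_nonneg _))
  have n3 : (0:ℝ) ≤ (ecount Gbar (S ∩ V) (V \ (S ∩ V)) : ℝ) := Nat.cast_nonneg _
  have n4 : (0:ℝ) ≤ (ecount Gbar (S ∩ V) (V' \ (S ∩ V')) : ℝ) := Nat.cast_nonneg _
  have n5 : (0:ℝ) ≤ (ecount Gbar (S ∩ V') (L \ (S ∩ L)) : ℝ) := Nat.cast_nonneg _
  linarith [mul_le_mul_of_nonneg_left c1 hφ.le, mul_le_mul_of_nonneg_left c2 hφ.le,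
    mul_le_mul_of_nonneg_left c3 hφ.le, c4, c5, q1, q2, q3, n1, n2, n3, n4, n5]


/-- The `k`-clique gadget preserves expansion: if `Ḡ` is built from a graph `G` with no
isolated vertices by adding an independent copy `V'` of `V` (joined to `V` by the edges
`{u v' : uv ∈ E(G)}`) and applying the core gadget to `V'` only, then there is a constant
`c > 0`, depending only on `φ`, such that `Ḡ` is a `c`-expander. -/
theorem clique_gadget_isExpander :
    ∃ c : ℝ → ℝ, (∀ φ : ℝ, 0 < φ → φ ≤ 1 → 0 < c φ) ∧
      ∀ (W : Type) [Fintype W] [DecidableEq W]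
        (Gbar : SimpleGraph W) [DecidableRel Gbar.Adj]
        (V V' L R : Finset W) (cp : W → W) (N d : ℕ) (φ : ℝ),
        L.card = N → R.card = N → 1 ≤ N → 3 ≤ d → 0 < φ → φ ≤ 1 →
        Disjoint V V' → Disjoint V L → Disjoint V R →
        Disjoint V' L → Disjoint V' R → Disjoint L R →
        V ∪ V' ∪ L ∪ R = Finset.univ →
        -- cp is a bijection from V onto its disjoint copy V'
        (∀ v ∈ V, cp v ∈ V') →
        (∀ u ∈ V, ∀ v ∈ V, cp u = cp v → u = v) →
        (∀ w ∈ V', ∃ v ∈ V, cp v = w) →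
        -- G (the subgraph induced on V) has no isolated vertices
        (∀ v ∈ V, (Gbar.neighborFinset v ∩ V).Nonempty) →
        -- the edges between V and V' are exactly {u v' : uv ∈ E(G)}
        (∀ u ∈ V, ∀ v ∈ V, (Gbar.Adj u (cp v) ↔ Gbar.Adj u v)) →
        -- V', L and R are independent sets
        (∀ u ∈ V', ∀ v ∈ V', ¬ Gbar.Adj u v) →
        (∀ x ∈ L, ∀ y ∈ L, ¬ Gbar.Adj x y) →
        (∀ x ∈ R, ∀ y ∈ R, ¬ Gbar.Adj x y) →
        -- no edges between V and L, between V and R, or between V' and R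
        (∀ u ∈ V, ∀ x ∈ L, ¬ Gbar.Adj u x) →
        (∀ u ∈ V, ∀ y ∈ R, ¬ Gbar.Adj u y) →
        (∀ u ∈ V', ∀ y ∈ R, ¬ Gbar.Adj u y) →
        -- every v' ∈ V' has exactly deg_G(v) + 3 neighbors in L
        (∀ v ∈ V, (Gbar.neighborFinset (cp v) ∩ L).card
            = (Gbar.neighborFinset v ∩ V).card + 3) →
        -- every x ∈ L has at most d neighbors in V'
        (∀ x ∈ L, (Gbar.neighborFinset x ∩ V').card ≤ d) →
        -- the bipartite graph X of L–R edges is d-regular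
        (∀ x ∈ L, (Gbar.neighborFinset x ∩ R).card = d) →
        (∀ y ∈ R, (Gbar.neighborFinset y ∩ L).card = d) →
        -- and a φ·d-edge expander
        (∀ T ⊆ L ∪ R, T.card ≤ N →
          φ * (d : ℝ) * (T.card : ℝ) ≤
            ((ecount Gbar (T ∩ L) (R \ T) + ecount Gbar (T ∩ R) (L \ T) : ℕ) : ℝ)) →
        IsExpander Gbar (c φ) := by
  refine ⟨fun φ => φ / 6, fun φ hφ _ => by positivity, ?_⟩
  intro W _ _ Gbar _ V V' L R cp N d φ hL hR hN hd hφ hφ1 hVV' hVL hVR hV'L hV'R hLR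
    huniv hcp1 hcp2 hcp3 hnoiso hcopy hindV' hindL hindR hVLe hVRe hV'Re hdegL hLV'
    hLd hRd hexp
  intro S hSne hSneu
  have hdeg := degree_decomp Gbar V V' L R hVV' hVL hVR hV'L hV'R hLR huniv
  have hdegpos : ∀ w : W, 1 ≤ Gbar.degree w := by
    intro w
    have hw : w ∈ V ∪ V' ∪ L ∪ R := huniv ▸ Finset.mem_univ w
    rw [Finset.mem_union, Finset.mem_union, Finset.mem_union] at hw
    rcases hw with ((hw | hw) | hw) | hw
    · have h1 : 1 ≤ (Gbar.neighborFinset w ∩ V).card := Finset.card_pos.mpr (hnoiso w hw)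
      rw [hdeg w]; omega
    · obtain ⟨v, hv, rfl⟩ := hcp3 w hw
      have := hdegL v hv
      rw [hdeg (cp v)]; omega
    · have := hLd w hw; rw [hdeg w]; omega
    · have := hRd w hw; rw [hdeg w]; omega
  have hvolpos : ∀ X : Finset W, X.Nonempty → 0 < vol Gbar X := by
    intro X hX
    unfold vol
    exact Finset.sum_pos (fun w _ => hdegpos w) hX
  have hScne : Sᶜ.Nonempty := by
    by_contra h
    rw [Finset.not_nonempty_iff_eq_empty] at h
    exact hSneu ((Finset.compl_eq_empty_iff S).mp h)
  constructor
  · exact lt_min (hvolpos S hSne) (hvolpos Sᶜ hScne)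
  · have hkey := key_bound Gbar V V' L R cp N d φ hd hφ hφ1 hVV' hVL hVR hV'L hV'R hLR
      huniv hcp1 hcp2 hcp3 hcopy hindV' hindL hindR hVLe hVRe hV'Re hdegL hLV' hLd hRd hexp
    rcases le_or_gt ((S ∩ (L ∪ R)).card) N with hc | hc
    · have h := hkey S hc
      have hmin : min ((vol Gbar S : ℝ)) ((vol Gbar Sᶜ : ℝ)) ≤ (vol Gbar S : ℝ) :=
        min_le_left _ _
      have h2 : φ * min ((vol Gbar S : ℝ)) ((vol Gbar Sᶜ : ℝ)) ≤ φ * (vol Gbar S : ℝ) :=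
        mul_le_mul_of_nonneg_left hmin hφ.le
      show φ / 6 * min ((vol Gbar S : ℝ)) ((vol Gbar Sᶜ : ℝ)) ≤ (ecount Gbar S Sᶜ : ℝ)
      linarith
    · have hcard : (S ∩ (L ∪ R)).card + (Sᶜ ∩ (L ∪ R)).card = N + N := by
        have hun : (S ∩ (L ∪ R)) ∪ (Sᶜ ∩ (L ∪ R)) = L ∪ R := by
          ext x
          simp only [Finset.mem_union, Finset.mem_inter, Finset.mem_compl]
          tauto
        have hdj : Disjoint (S ∩ (L ∪ R)) (Sᶜ ∩ (L ∪ R)) :=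
          Finset.disjoint_left.mpr fun x h1 h2 =>
            (Finset.mem_compl.mp (Finset.mem_inter.mp h2).1) (Finset.mem_inter.mp h1).1
        calc (S ∩ (L ∪ R)).card + (Sᶜ ∩ (L ∪ R)).card
            = ((S ∩ (L ∪ R)) ∪ (Sᶜ ∩ (L ∪ R))).card :=
              (Finset.card_union_of_disjoint hdj).symm
        _ = (L ∪ R).card := by rw [hun]
        _ = N + N := by rw [Finset.card_union_of_disjoint hLR, hL, hR]
      have hc' : (Sᶜ ∩ (L ∪ R)).card ≤ N := by omega
      have h := hkey Sᶜ hc'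
      rw [compl_compl, ecount_comm_s6 Gbar Sᶜ S] at h
      have hmin : min ((vol Gbar S : ℝ)) ((vol Gbar Sᶜ : ℝ)) ≤ (vol Gbar Sᶜ : ℝ) :=
        min_le_right _ _
      have h2 : φ * min ((vol Gbar S : ℝ)) ((vol Gbar Sᶜ : ℝ)) ≤ φ * (vol Gbar Sᶜ : ℝ) :=
        mul_le_mul_of_nonneg_left hmin hφ.le
      show φ / 6 * min ((vol Gbar S : ℝ)) ((vol Gbar Sᶜ : ℝ)) ≤ (ecount Gbar S Sᶜ : ℝ)
      linarith
end

section
/- Let C ≥ 1 be an integer and let G be a finite nonempty simple graph with maximum subgraph density ρ(G) < C + 1/2. Let G_C be the graph obtained from G by attaching a (2C+1)-clique to every vertex. Then the maximum subgraph density of G_C equals ρ(G)/(2C+1) + C. -/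
open Finset

open scoped Classical

/-- Twice the number of edges of `G` with both endpoints in `S`
(adjacent ordered pairs in `S × S`). -/
noncomputable def pairCount {V : Type*} [Fintype V] (G : SimpleGraph V) (S : Finset V) : ℕ :=
  ((S ×ˢ S).filter fun p => G.Adj p.1 p.2).card

/-- The number `e(S)` of edges of `G` with both endpoints in `S`. -/
noncomputable def eIn {V : Type*} [Fintype V] (G : SimpleGraph V) (S : Finset V) : ℕ :=
  pairCount G S / 2

/-- The density `ρ(S) = e(S)/|S|` of a set of vertices. -/
noncomputable def density {V : Type*} [Fintype V] (G : SimpleGraph V) (S : Finset V) : ℝ :=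
  (eIn G S : ℝ) / (S.card : ℝ)

/-- The set of densities of nonempty vertex subsets of `G`; the maximum subgraph
density `ρ(G)` is the greatest element of this set. -/
def densitySet {V : Type*} [Fintype V] (G : SimpleGraph V) : Set ℝ :=
  {x : ℝ | ∃ S : Finset V, S.Nonempty ∧ density G S = x}

/-- The auxiliary relation used to attach a `(2C+1)`-clique to every vertex of `G`. -/
def attachRel {V : Type*} (G : SimpleGraph V) (C : ℕ) :
    (V ⊕ V × Fin (2 * C)) → (V ⊕ V × Fin (2 * C)) → Prop
  | Sum.inl u, Sum.inl v => G.Adj u v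
  | Sum.inl u, Sum.inr p => u = p.1
  | Sum.inr p, Sum.inr q => p.1 = q.1
  | Sum.inr _, Sum.inl _ => False

/-- The graph `G_C` obtained from `G` by attaching a `(2C+1)`-clique to every vertex:
for each `v ∈ V(G)` one adds `2C` new vertices forming, together with `v`, a clique
`K_v` of size `2C+1`; the new vertices have no other edges. -/
def attachCliques {V : Type*} (G : SimpleGraph V) (C : ℕ) :
    SimpleGraph (V ⊕ V × Fin (2 * C)) :=
  SimpleGraph.fromRel (attachRel G C)

set_option linter.unusedSectionVars false

section Aux
variable {V : Type*} [Fintype V] {C : ℕ}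

lemma pairCount_even (G : SimpleGraph V) (S : Finset V) : Even (pairCount G S) := by
  classical
  letI : LinearOrder V := LinearOrder.lift' (Fintype.equivFin V) (Fintype.equivFin V).injective
  set F := (S ×ˢ S).filter fun p => G.Adj p.1 p.2 with hF
  have hsplit : F = (F.filter fun p => p.1 < p.2) ∪ (F.filter fun p => p.2 < p.1) := by
    ext p
    simp only [Finset.mem_union, Finset.mem_filter]
    constructor
    · intro hp
      have hne : p.1 ≠ p.2 := ((Finset.mem_filter.mp hp).2).ne
      rcases lt_or_gt_of_ne hne with h | h
      · exact Or.inl ⟨hp, h⟩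
      · exact Or.inr ⟨hp, h⟩
    · rintro (⟨h, _⟩ | ⟨h, _⟩) <;> exact h
  have hdisj : Disjoint (F.filter fun p => p.1 < p.2) (F.filter fun p => p.2 < p.1) := by
    rw [Finset.disjoint_left]
    intro p h1 h2
    exact absurd ((Finset.mem_filter.mp h1).2.trans (Finset.mem_filter.mp h2).2) (lt_irrefl _)
  have hcard : (F.filter fun p => p.1 < p.2).card = (F.filter fun p => p.2 < p.1).card := by
    apply Finset.card_nbij' Prod.swap Prod.swap
    · intro p hp
      simp only [Finset.mem_coe, Finset.mem_filter, hF, Finset.mem_product] at hp ⊢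
      exact ⟨⟨⟨hp.1.1.2, hp.1.1.1⟩, hp.1.2.symm⟩, hp.2⟩
    · intro p hp
      simp only [Finset.mem_coe, Finset.mem_filter, hF, Finset.mem_product] at hp ⊢
      exact ⟨⟨⟨hp.1.1.2, hp.1.1.1⟩, hp.1.2.symm⟩, hp.2⟩
    · intro p _; simp
    · intro p _; simp
  have : pairCount G S
      = (F.filter fun p => p.1 < p.2).card + (F.filter fun p => p.2 < p.1).card := by
    rw [pairCount, ← Finset.card_union_of_disjoint hdisj, ← hsplit]
  rw [this, ← hcard]
  exact ⟨_, rfl⟩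

lemma pairCount_eq_two_mul (G : SimpleGraph V) (S : Finset V) :
    pairCount G S = 2 * eIn G S := by
  obtain ⟨m, hm⟩ := pairCount_even G S
  rw [eIn, hm]
  omega

lemma density_singleton (G : SimpleGraph V) (v : V) : density G {v} = 0 := by
  have h : pairCount G {v} = 0 := by
    rw [pairCount, Finset.card_eq_zero, Finset.eq_empty_iff_forall_notMem]
    intro p hp
    simp only [Finset.mem_filter, Finset.mem_product, Finset.mem_singleton] at hp
    obtain ⟨⟨h1, h2⟩, h3⟩ := hp
    rw [h1, h2] at h3
    exact G.irrefl h3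
  simp [density, eIn, h]

lemma cast_mul_pred (t : ℕ) : ((t * (t - 1) : ℕ) : ℝ) = (t : ℝ)^2 - t := by
  cases t with
  | zero => simp
  | succ n => push_cast [Nat.succ_sub_one]; ring

lemma adj_inl_inl (G : SimpleGraph V) (C : ℕ) (u v : V) :
    (attachCliques G C).Adj (Sum.inl u) (Sum.inl v) ↔ G.Adj u v := by
  simp only [attachCliques, SimpleGraph.fromRel_adj, attachRel]
  constructor
  · rintro ⟨_, h | h⟩
    · exact h
    · exact h.symm
  · intro h
    exact ⟨by simp [h.ne], Or.inl h⟩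

lemma adj_inl_inr (G : SimpleGraph V) (C : ℕ) (u : V) (p : V × Fin (2 * C)) :
    (attachCliques G C).Adj (Sum.inl u) (Sum.inr p) ↔ u = p.1 := by
  simp [attachCliques, SimpleGraph.fromRel_adj, attachRel]

lemma adj_inr_inl (G : SimpleGraph V) (C : ℕ) (u : V) (p : V × Fin (2 * C)) :
    (attachCliques G C).Adj (Sum.inr p) (Sum.inl u) ↔ u = p.1 := by
  simp [attachCliques, SimpleGraph.fromRel_adj, attachRel, eq_comm]

lemma adj_inr_inr (G : SimpleGraph V) (C : ℕ) (p q : V × Fin (2 * C)) :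
    (attachCliques G C).Adj (Sum.inr p) (Sum.inr q) ↔ p ≠ q ∧ p.1 = q.1 := by
  simp only [attachCliques, SimpleGraph.fromRel_adj, attachRel]
  constructor
  · rintro ⟨h, h1 | h1⟩
    · exact ⟨by simpa using h, h1⟩
    · exact ⟨by simpa using h, h1.symm⟩
  · rintro ⟨h, h1⟩
    exact ⟨by simpa using h, Or.inl h1⟩

noncomputable def leftSet (T : Finset (V ⊕ V × Fin (2 * C))) : Finset V :=
  T.preimage Sum.inl Sum.inl_injective.injOn

noncomputable def rightSet (T : Finset (V ⊕ V × Fin (2 * C))) : Finset (V × Fin (2 * C)) :=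
  T.preimage Sum.inr Sum.inr_injective.injOn

noncomputable def fib (T : Finset (V ⊕ V × Fin (2 * C))) (v : V) : Finset (Fin (2 * C)) :=
  univ.filter fun j => Sum.inr (v, j) ∈ T

lemma fib_card (T : Finset (V ⊕ V × Fin (2 * C))) (v : V) :
    ((rightSet T).filter fun q => q.1 = v).card = (fib T v).card := by
  apply Finset.card_nbij' (fun p => p.2) (fun j => (v, j))
  · intro p hp
    simp only [Finset.mem_coe, rightSet, Finset.mem_filter, Finset.mem_preimage] at hp
    simp only [Finset.mem_coe, fib, Finset.mem_filter, Finset.mem_univ, true_and]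
    have : (v, p.2) = p := by rw [← hp.2]
    rw [this]; exact hp.1
  · intro j hj
    simp only [Finset.mem_coe, fib, Finset.mem_filter, Finset.mem_univ, true_and] at hj
    simp [rightSet, Finset.mem_preimage, hj]
  · intro p hp
    simp only [Finset.mem_coe, rightSet, Finset.mem_filter, Finset.mem_preimage] at hp
    rw [← hp.2]
  · intro j _; rfl

lemma T_eq (T : Finset (V ⊕ V × Fin (2 * C))) :
    T = (leftSet T).map ⟨Sum.inl, Sum.inl_injective⟩ ∪
        (rightSet T).map ⟨Sum.inr, Sum.inr_injective⟩ := by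
  ext x
  cases x <;> simp [leftSet, rightSet, Finset.mem_preimage]

lemma T_disj (T : Finset (V ⊕ V × Fin (2 * C))) :
    Disjoint ((leftSet T).map ⟨Sum.inl, Sum.inl_injective⟩)
      ((rightSet T).map (⟨Sum.inr, Sum.inr_injective⟩ :
        V × Fin (2 * C) ↪ V ⊕ V × Fin (2 * C))) := by
  rw [Finset.disjoint_left]
  rintro x hx hy
  simp only [Finset.mem_map, Function.Embedding.coeFn_mk] at hx hy
  obtain ⟨u, _, rfl⟩ := hx
  obtain ⟨p, _, h⟩ := hy
  exact absurd h (by simp)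

lemma card_T (T : Finset (V ⊕ V × Fin (2 * C))) :
    T.card = (leftSet T).card + ∑ v : V, (fib T v).card := by
  conv_lhs => rw [T_eq T]
  rw [Finset.card_union_of_disjoint (T_disj T), Finset.card_map, Finset.card_map]
  congr 1
  rw [Finset.card_eq_sum_card_fiberwise (f := Prod.fst) (t := univ) (fun x _ => mem_univ _)]
  exact Finset.sum_congr rfl fun v _ => fib_card T v

lemma count_key (G : SimpleGraph V) (C : ℕ) (T : Finset (V ⊕ V × Fin (2 * C))) :
    pairCount (attachCliques G C) T =
      pairCount G (leftSet T) + 2 * ∑ v ∈ leftSet T, (fib T v).card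
        + ∑ v : V, (fib T v).card * ((fib T v).card - 1) := by
  have expand : ∀ (W : Type _) [Fintype W] (H : SimpleGraph W) (S : Finset W),
      pairCount H S = ∑ x ∈ S, ∑ y ∈ S, if H.Adj x y then 1 else 0 := by
    intro W _ H S
    rw [pairCount, Finset.card_filter, Finset.sum_product]
  rw [expand]
  conv_lhs => rw [T_eq T]
  simp only [Finset.sum_union (T_disj T), Finset.sum_map, Function.Embedding.coeFn_mk]
  have h11 : (∑ u ∈ leftSet T, ∑ v ∈ leftSet T,
      if (attachCliques G C).Adj (Sum.inl u) (Sum.inl v) then 1 else 0)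
      = pairCount G (leftSet T) := by
    simp_rw [adj_inl_inl]
    rw [expand]
  have h12 : (∑ u ∈ leftSet T, ∑ p ∈ rightSet T,
      if (attachCliques G C).Adj (Sum.inl u) (Sum.inr p) then 1 else 0)
      = ∑ v ∈ leftSet T, (fib T v).card := by
    refine Finset.sum_congr rfl fun u _ => ?_
    simp_rw [adj_inl_inr]
    rw [← Finset.card_filter, ← fib_card T u]
    congr 1
    ext p
    simp [eq_comm]
  have h21 : (∑ p ∈ rightSet T, ∑ u ∈ leftSet T,
      if (attachCliques G C).Adj (Sum.inr p) (Sum.inl u) then 1 else 0)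
      = ∑ v ∈ leftSet T, (fib T v).card := by
    rw [Finset.sum_comm]
    refine Finset.sum_congr rfl fun u _ => ?_
    simp_rw [adj_inr_inl]
    rw [← Finset.card_filter, ← fib_card T u]
    congr 1
    ext p
    simp [eq_comm]
  have h22 : (∑ p ∈ rightSet T, ∑ q ∈ rightSet T,
      if (attachCliques G C).Adj (Sum.inr p) (Sum.inr q) then 1 else 0)
      = ∑ v : V, (fib T v).card * ((fib T v).card - 1) := by
    have step : ∀ p ∈ rightSet T, (∑ q ∈ rightSet T,
        if (attachCliques G C).Adj (Sum.inr p) (Sum.inr q) then 1 else 0)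
        = (fib T p.1).card - 1 := by
      intro p hp
      simp_rw [adj_inr_inr]
      rw [← Finset.card_filter]
      have hset : (rightSet T).filter (fun q => p ≠ q ∧ p.1 = q.1)
          = ((rightSet T).filter fun q => q.1 = p.1).erase p := by
        ext q
        simp only [Finset.mem_filter, Finset.mem_erase]
        constructor
        · rintro ⟨hq, hne, heq⟩
          exact ⟨hne.symm, hq, heq.symm⟩
        · rintro ⟨hne, hq, heq⟩
          exact ⟨hq, hne.symm, heq.symm⟩
      have hmem : p ∈ (rightSet T).filter fun q => q.1 = p.1 :=
        Finset.mem_filter.mpr ⟨hp, rfl⟩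
      rw [hset, Finset.card_erase_of_mem hmem, fib_card]
    rw [Finset.sum_congr rfl step,
      ← Finset.sum_fiberwise_of_maps_to (g := Prod.fst) (t := univ)
        (fun p _ => Finset.mem_univ p.1)]
    refine Finset.sum_congr rfl fun v _ => ?_
    have hconst : ∀ p ∈ (rightSet T).filter (fun p => p.1 = v),
        (fib T p.1).card - 1 = (fib T v).card - 1 := by
      intro p hp
      rw [(Finset.mem_filter.mp hp).2]
    rw [Finset.sum_congr rfl hconst, Finset.sum_const, fib_card, smul_eq_mul]
  simp only [Finset.sum_add_distrib]
  rw [h11, h12, h21, h22]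
  ring

end Aux


/-- If `G` is a finite nonempty graph with maximum subgraph density `ρ(G) < C + 1/2`,
then the maximum subgraph density of `G_C` equals `ρ(G)/(2C+1) + C`. -/
theorem attachCliques_maxDensity {V : Type*} [Fintype V] [Nonempty V]
    (C : ℕ) (hC : 1 ≤ C) (G : SimpleGraph V) (ρG : ℝ)
    (hmax : IsGreatest (densitySet G) ρG)
    (hlt : ρG < (C : ℝ) + 1 / 2) :
    IsGreatest (densitySet (attachCliques G C)) (ρG / (2 * (C : ℝ) + 1) + (C : ℝ)) := by
  have hρ0 : 0 ≤ ρG := by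
    obtain ⟨v⟩ := ‹Nonempty V›
    have := hmax.2 ⟨{v}, Finset.singleton_nonempty v, rfl⟩
    rwa [density_singleton G v] at this
  constructor
  · -- membership
    obtain ⟨S₀, hS₀ne, hS₀⟩ := hmax.1
    set T₀ : Finset (V ⊕ V × Fin (2 * C)) :=
      S₀.map ⟨Sum.inl, Sum.inl_injective⟩ ∪
        (S₀ ×ˢ (univ : Finset (Fin (2 * C)))).map ⟨Sum.inr, Sum.inr_injective⟩ with hT₀
    have hmemT₀ : ∀ x : V ⊕ V × Fin (2 * C), x ∈ T₀ ↔
        (∃ u ∈ S₀, Sum.inl u = x) ∨ (∃ p ∈ S₀ ×ˢ (univ : Finset (Fin (2 * C))), Sum.inr p = x) := by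
      intro x
      simp [hT₀]
    have hleft : leftSet T₀ = S₀ := by
      ext v
      simp only [leftSet, Finset.mem_preimage, hmemT₀]
      constructor
      · rintro (⟨u, hu, h⟩ | ⟨p, _, h⟩)
        · rwa [← Sum.inl_injective h]
        · exact absurd h (by simp)
      · intro hv
        exact Or.inl ⟨v, hv, rfl⟩
    have hfib : ∀ v : V, (fib T₀ v).card = if v ∈ S₀ then 2 * C else 0 := by
      intro v
      by_cases hv : v ∈ S₀
      · rw [if_pos hv]
        have : fib T₀ v = univ := by
          ext j
          simp only [fib, Finset.mem_filter, Finset.mem_univ, true_and, hmemT₀, iff_true]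
          exact Or.inr ⟨(v, j), by simp [hv], rfl⟩
        rw [this]
        simp
      · rw [if_neg hv]
        have : fib T₀ v = ∅ := by
          ext j
          simp only [fib, Finset.mem_filter, Finset.mem_univ, true_and, hmemT₀,
            Finset.notMem_empty, iff_false]
          rintro (⟨u, _, h⟩ | ⟨p, hp, h⟩)
          · exact absurd h (by simp)
          · obtain rfl : p = (v, j) := Sum.inr_injective h
            exact hv (Finset.mem_product.mp hp).1
        rw [this]
        simp
    set s := S₀.card with hs
    have hsumU : ∑ v : V, (fib T₀ v).card = 2 * C * s := by
      simp_rw [hfib]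
      rw [Finset.sum_ite_mem, Finset.univ_inter, Finset.sum_const, smul_eq_mul, mul_comm]
    have hsumA : ∑ v ∈ S₀, (fib T₀ v).card = 2 * C * s := by
      rw [Finset.sum_congr rfl fun v hv => by rw [hfib v, if_pos hv],
        Finset.sum_const, smul_eq_mul, mul_comm]
    have hsum3 : ∑ v : V, (fib T₀ v).card * ((fib T₀ v).card - 1)
        = 2 * C * (2 * C - 1) * s := by
      have h4 : ∀ v : V, (fib T₀ v).card * ((fib T₀ v).card - 1)
          = if v ∈ S₀ then 2 * C * (2 * C - 1) else 0 := by
        intro v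
        rw [hfib]
        split <;> simp
      simp_rw [h4]
      rw [Finset.sum_ite_mem, Finset.univ_inter, Finset.sum_const, smul_eq_mul, mul_comm]
    obtain ⟨m, hm⟩ := pairCount_even G S₀
    have heInS₀ : eIn G S₀ = m := by rw [eIn, hm]; omega
    have hpc : pairCount (attachCliques G C) T₀
        = 2 * m + 2 * (2 * C * s) + 2 * C * (2 * C - 1) * s := by
      rw [count_key, hleft, hsumA, hsum3, hm]
      omega
    have heIn : eIn (attachCliques G C) T₀ = m + 2 * C * s + C * (2 * C - 1) * s := by
      rw [eIn, hpc]
      have h5 : 2 * m + 2 * (2 * C * s) + 2 * C * (2 * C - 1) * s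
          = 2 * (m + 2 * C * s + C * (2 * C - 1) * s) := by ring
      rw [h5, Nat.mul_div_cancel_left _ (by norm_num)]
    have hcardT₀ : T₀.card = s + 2 * C * s := by
      rw [card_T, hleft, hsumU]
    refine ⟨T₀, ?_, ?_⟩
    · obtain ⟨v₀, hv₀⟩ := hS₀ne
      exact ⟨Sum.inl v₀, (hmemT₀ _).mpr (Or.inl ⟨v₀, hv₀, rfl⟩)⟩
    · rw [density, heIn, hcardT₀]
      have hs0 : (0:ℝ) < (s:ℝ) := by
        exact_mod_cast hS₀ne.card_pos
      have hρeq : ρG = (m : ℝ) / (s : ℝ) := by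
        rw [← hS₀, density, heInS₀, hs]
      rw [hρeq]
      have h2C1 : (1:ℕ) ≤ 2 * C := by omega
      push_cast [Nat.cast_sub h2C1]
      have hs0' : (s:ℝ) ≠ 0 := ne_of_gt hs0
      have hplus : (s:ℝ) + 2 * (C:ℝ) * (s:ℝ) ≠ 0 := by nlinarith
      field_simp
      ring
  · -- upper bound
    rintro x ⟨T, hTne, rfl⟩
    have ht2C : ∀ v : V, ((fib T v).card : ℝ) ≤ 2 * (C:ℝ) := by
      intro v
      have h1 : (fib T v).card ≤ 2 * C := by
        calc (fib T v).card ≤ (univ : Finset (Fin (2 * C))).card := Finset.card_le_univ _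
        _ = 2 * C := by simp
      exact_mod_cast h1
    have ht0 : ∀ v : V, (0:ℝ) ≤ ((fib T v).card : ℝ) := fun v => Nat.cast_nonneg _
    -- pointwise estimates
    have pwA : ∀ v : V, (2 * (C:ℝ) + 1) * (((fib T v).card : ℝ)^2 + (fib T v).card)
        ≤ 2 * (ρG + (C:ℝ) * (2 * (C:ℝ) + 1)) * (fib T v).card
          + (2 * (ρG + (C:ℝ) * (2 * (C:ℝ) + 1)) - 2 * (2 * (C:ℝ) + 1) * ρG) := by
      intro v
      have hnn : (0:ℝ) ≤ (2 * (C:ℝ) + 1) * (fib T v).card := by positivity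
      have hf2 : (0:ℝ) ≤ (2 * (C:ℝ) + 1) * (((fib T v).card : ℝ) + 1) - 2 * ρG := by
        nlinarith [ht0 v]
      have P : (0:ℝ) ≤ (2 * (C:ℝ) - (fib T v).card)
          * ((2 * (C:ℝ) + 1) * (((fib T v).card : ℝ) + 1) - 2 * ρG) :=
        mul_nonneg (by linarith [ht2C v]) hf2
      nlinarith [P]
    have pwB : ∀ v : V, (2 * (C:ℝ) + 1) * (((fib T v).card : ℝ)^2 - (fib T v).card)
        ≤ 2 * (ρG + (C:ℝ) * (2 * (C:ℝ) + 1)) * (fib T v).card := by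
      intro v
      have Q : (0:ℝ) ≤ ((fib T v).card : ℝ)
          * ((2 * (C:ℝ) + 1) * ((2 * (C:ℝ) + 1) - (fib T v).card) + 2 * ρG) := by
        apply mul_nonneg (ht0 v)
        have h1 : ((fib T v).card : ℝ) ≤ 2 * (C:ℝ) + 1 - 1 := by linarith [ht2C v]
        nlinarith
      nlinarith [Q]
    -- pairCount of G on the left part
    have hPA : (pairCount G (leftSet T) : ℝ) ≤ 2 * ρG * (leftSet T).card := by
      rcases (leftSet T).eq_empty_or_nonempty with h | h
      · rw [h]
        simp [pairCount]
      · have hle : density G (leftSet T) ≤ ρG := hmax.2 ⟨leftSet T, h, rfl⟩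
        have hcard : (0:ℝ) < ((leftSet T).card : ℝ) := by exact_mod_cast h.card_pos
        rw [density, div_le_iff₀ hcard] at hle
        have h2 : (pairCount G (leftSet T) : ℝ) = 2 * (eIn G (leftSet T) : ℝ) := by
          exact_mod_cast congrArg (Nat.cast (R := ℝ)) (pairCount_eq_two_mul G (leftSet T))
        rw [h2]
        nlinarith
    -- cast forms of the counting identities
    have hsum3 : ((∑ v : V, (fib T v).card * ((fib T v).card - 1) : ℕ) : ℝ)
        = ∑ v : V, (((fib T v).card : ℝ)^2 - (fib T v).card) := by
      rw [Nat.cast_sum]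
      exact Finset.sum_congr rfl fun v _ => cast_mul_pred _
    have hp : (pairCount (attachCliques G C) T : ℝ)
        = (pairCount G (leftSet T) : ℝ) + 2 * ∑ v ∈ leftSet T, ((fib T v).card : ℝ)
          + ∑ v : V, (((fib T v).card : ℝ)^2 - (fib T v).card) := by
      rw [count_key G C T, Nat.cast_add, Nat.cast_add, hsum3, Nat.cast_mul, Nat.cast_sum]
      norm_num
    have hn : (T.card : ℝ) = ((leftSet T).card : ℝ) + ∑ v : V, ((fib T v).card : ℝ) := by
      rw [card_T T]
      push_cast
      ring
    -- sum-level estimates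
    have HA : (2 * (C:ℝ) + 1) * ((∑ v ∈ leftSet T, ((fib T v).card : ℝ)^2)
          + ∑ v ∈ leftSet T, ((fib T v).card : ℝ))
        ≤ 2 * (ρG + (C:ℝ) * (2 * (C:ℝ) + 1)) * (∑ v ∈ leftSet T, ((fib T v).card : ℝ))
          + (2 * (ρG + (C:ℝ) * (2 * (C:ℝ) + 1)) - 2 * (2 * (C:ℝ) + 1) * ρG)
            * (leftSet T).card := by
      calc (2 * (C:ℝ) + 1) * ((∑ v ∈ leftSet T, ((fib T v).card : ℝ)^2)
            + ∑ v ∈ leftSet T, ((fib T v).card : ℝ))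
          = ∑ v ∈ leftSet T, (2 * (C:ℝ) + 1) * (((fib T v).card : ℝ)^2 + (fib T v).card) := by
            rw [← Finset.sum_add_distrib, Finset.mul_sum]
        _ ≤ ∑ v ∈ leftSet T, (2 * (ρG + (C:ℝ) * (2 * (C:ℝ) + 1)) * (fib T v).card
              + (2 * (ρG + (C:ℝ) * (2 * (C:ℝ) + 1)) - 2 * (2 * (C:ℝ) + 1) * ρG)) :=
            Finset.sum_le_sum fun v _ => pwA v
        _ = _ := by
            rw [Finset.sum_add_distrib, ← Finset.mul_sum, Finset.sum_const, nsmul_eq_mul,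
              mul_comm (((leftSet T).card : ℕ) : ℝ)]
    have HB : (2 * (C:ℝ) + 1) * ((∑ v ∈ (leftSet T)ᶜ, ((fib T v).card : ℝ)^2)
          - ∑ v ∈ (leftSet T)ᶜ, ((fib T v).card : ℝ))
        ≤ 2 * (ρG + (C:ℝ) * (2 * (C:ℝ) + 1)) * ∑ v ∈ (leftSet T)ᶜ, ((fib T v).card : ℝ) := by
      calc (2 * (C:ℝ) + 1) * ((∑ v ∈ (leftSet T)ᶜ, ((fib T v).card : ℝ)^2)
            - ∑ v ∈ (leftSet T)ᶜ, ((fib T v).card : ℝ))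
          = ∑ v ∈ (leftSet T)ᶜ, (2 * (C:ℝ) + 1) * (((fib T v).card : ℝ)^2 - (fib T v).card) := by
            rw [← Finset.sum_sub_distrib, Finset.mul_sum]
        _ ≤ ∑ v ∈ (leftSet T)ᶜ, 2 * (ρG + (C:ℝ) * (2 * (C:ℝ) + 1)) * ((fib T v).card : ℝ) :=
            Finset.sum_le_sum fun v _ => pwB v
        _ = _ := by rw [← Finset.mul_sum]
    have master : (2 * (C:ℝ) + 1) * (pairCount (attachCliques G C) T : ℝ)
        ≤ 2 * (ρG + (C:ℝ) * (2 * (C:ℝ) + 1)) * (T.card : ℝ) := by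
      rw [hp, hn]
      rw [← Finset.sum_add_sum_compl (leftSet T)
          (fun v => ((fib T v).card : ℝ)^2 - ((fib T v).card : ℝ)),
        ← Finset.sum_add_sum_compl (leftSet T) (fun v => ((fib T v).card : ℝ))]
      rw [Finset.sum_sub_distrib, Finset.sum_sub_distrib]
      have HP : (2 * (C:ℝ) + 1) * (pairCount G (leftSet T) : ℝ)
          ≤ (2 * (C:ℝ) + 1) * (2 * ρG * (leftSet T).card) :=
        mul_le_mul_of_nonneg_left hPA (by positivity)
      nlinarith [HA, HB, HP]
    -- conclude
    have hn0 : (0:ℝ) < (T.card : ℝ) := by exact_mod_cast hTne.card_pos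
    have hD0 : (0:ℝ) < 2 * (C:ℝ) + 1 := by positivity
    rw [density, div_le_iff₀ hn0]
    have heIn_le : (eIn (attachCliques G C) T : ℝ)
        ≤ (pairCount (attachCliques G C) T : ℝ) / 2 := by
      rw [eIn]
      exact_mod_cast Nat.cast_div_le
    have hfinal : (pairCount (attachCliques G C) T : ℝ) / 2
        ≤ (ρG / (2 * (C : ℝ) + 1) + (C : ℝ)) * (T.card : ℝ) := by
      rw [div_le_iff₀ (by norm_num : (0:ℝ) < 2)]
      have hτ : (ρG / (2 * (C : ℝ) + 1) + (C : ℝ)) * (2 * (C:ℝ) + 1)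
          = ρG + (C:ℝ) * (2 * (C:ℝ) + 1) := by
        field_simp
      refine le_of_mul_le_mul_left ?_ hD0
      calc (2 * (C:ℝ) + 1) * (pairCount (attachCliques G C) T : ℝ)
          ≤ 2 * (ρG + (C:ℝ) * (2 * (C:ℝ) + 1)) * (T.card : ℝ) := master
        _ = (2 * (C:ℝ) + 1) * ((ρG / (2 * (C : ℝ) + 1) + (C : ℝ)) * (T.card : ℝ) * 2) := by
            rw [← hτ]
            ring
    linarith
end

section
/- Let C ≥ 1 be an integer, let G be a finite nonempty simple graph with maximum subgraph density ρ(G) < C + 1/2, and let G_C be the graph obtained from G by attaching a (2C+1)-clique K_v to every vertex v. Suppose S ⊆ V(G_C) is nonempty, induces a connected subgraph of G_C, and attains the maximum subgraph density of G_C (ρ(S) = ρ(G_C)). Then for every v ∈ V(G), if S ∩ K_v ≠ ∅ then K_v ⊆ S. -/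
open Finset

open scoped Classical

/-- The clique `K_v` attached to the vertex `v` in `G_C`, as a finset of vertices. -/
def Kclique {V : Type*} [DecidableEq V] (C : ℕ) (v : V) : Finset (V ⊕ V × Fin (2 * C)) :=
  insert (Sum.inl v) (Finset.univ.image fun i : Fin (2 * C) => Sum.inr (v, i))

/-! ### Auxiliary lemmas -/

section AuxEven

lemma pairCount_two_eIn {V : Type*} [Fintype V] (G : SimpleGraph V) (S : Finset V) :
    2 * eIn G S = pairCount G S := by
  have hEven : Even (pairCount G S) := by
    classical
    obtain ⟨e⟩ : Nonempty (V ≃ Fin (Fintype.card V)) := ⟨Fintype.equivFin V⟩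
    set P := (S ×ˢ S).filter fun p => G.Adj p.1 p.2 with hP
    have hsplit : P = (P.filter fun p => e p.1 < e p.2) ∪ (P.filter fun p => e p.2 < e p.1) := by
      ext p
      simp only [mem_union, mem_filter]
      constructor
      · intro hp
        have hne : e p.1 ≠ e p.2 := by
          intro h
          have := e.injective h
          exact (G.ne_of_adj (by simpa [hP] using (mem_filter.mp hp).2)) this
        rcases lt_or_gt_of_ne hne with h | h
        · exact Or.inl ⟨hp, h⟩
        · exact Or.inr ⟨hp, h⟩
      · rintro (⟨hp, _⟩ | ⟨hp, _⟩) <;> exact hp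
    have hdisj : Disjoint (P.filter fun p => e p.1 < e p.2) (P.filter fun p => e p.2 < e p.1) := by
      rw [Finset.disjoint_left]
      intro p hp1 hp2
      simp only [mem_filter] at hp1 hp2
      exact absurd hp2.2 (not_lt.mpr hp1.2.le)
    have hcard : (P.filter fun p => e p.1 < e p.2).card = (P.filter fun p => e p.2 < e p.1).card := by
      apply Finset.card_bij' (i := fun p _ => Prod.swap p) (j := fun p _ => Prod.swap p)
      · intro p hp
        simp only [mem_filter, hP, mem_product, Prod.fst_swap, Prod.snd_swap] at hp ⊢
        exact ⟨⟨⟨hp.1.1.2, hp.1.1.1⟩, hp.1.2.symm⟩, hp.2⟩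
      · intro p hp
        simp only [mem_filter, hP, mem_product, Prod.fst_swap, Prod.snd_swap] at hp ⊢
        exact ⟨⟨⟨hp.1.1.2, hp.1.1.1⟩, hp.1.2.symm⟩, hp.2⟩
      · intro p _; simp
      · intro p _; simp
    have hc := Finset.card_union_of_disjoint hdisj
    rw [← hsplit] at hc
    refine ⟨(P.filter fun p => e p.1 < e p.2).card, ?_⟩
    show P.card = _
    rw [hc, hcard]
  obtain ⟨k, hk⟩ := hEven
  simp only [eIn]
  omega

lemma pairCount_eq_sum {V : Type*} [Fintype V] (G : SimpleGraph V) (S : Finset V) :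
    pairCount G S = ∑ x ∈ S, (S.filter fun y => G.Adj x y).card := by
  classical
  rw [pairCount, Finset.card_eq_sum_card_fiberwise (f := Prod.fst) (t := S)
    (fun p hp => (Finset.mem_product.mp (Finset.mem_filter.mp hp).1).1)]
  refine Finset.sum_congr rfl fun x hx => ?_
  refine Finset.card_bij' (fun p _ => p.2) (fun y _ => (x, y)) ?_ ?_ ?_ ?_
  case _ =>
    intro p hp
    simp only [mem_filter, mem_product] at hp ⊢
    obtain ⟨⟨⟨_, h2⟩, hadj⟩, rfl⟩ := hp
    exact ⟨h2, hadj⟩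
  case _ =>
    intro y hy
    simp only [mem_filter, mem_product] at hy ⊢
    exact ⟨⟨⟨hx, hy.1⟩, hy.2⟩, by trivial⟩
  case _ =>
    rintro ⟨p1, p2⟩ hp
    simp only [mem_filter] at hp
    simp [hp.2]
  case _ =>
    intro y hy; rfl

lemma pairCount_of_clique {V : Type*} [Fintype V] (G : SimpleGraph V) (S : Finset V)
    (h : ∀ x ∈ S, ∀ y ∈ S, x ≠ y → G.Adj x y) :
    pairCount G S = S.card * S.card - S.card := by
  classical
  rw [pairCount, ← Finset.offDiag_card]
  congr 1
  ext p
  simp only [mem_filter, mem_product, Finset.mem_offDiag]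
  constructor
  · rintro ⟨⟨h1, h2⟩, hadj⟩
    exact ⟨h1, h2, G.ne_of_adj hadj⟩
  · rintro ⟨h1, h2, hne⟩
    exact ⟨⟨h1, h2⟩, h p.1 h1 p.2 h2 hne⟩

end AuxEven

section AuxAdj

variable {V : Type*} (G : SimpleGraph V) (C : ℕ)

lemma attach_adj_inl_inl (u v : V) :
    (attachCliques G C).Adj (Sum.inl u) (Sum.inl v) ↔ G.Adj u v := by
  simp only [attachCliques, SimpleGraph.fromRel_adj, attachRel]
  constructor
  · rintro ⟨-, h | h⟩
    · exact h
    · exact h.symm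
  · intro h
    exact ⟨by simpa using G.ne_of_adj h, Or.inl h⟩

lemma attach_adj_inl_inr (u : V) (p : V × Fin (2 * C)) :
    (attachCliques G C).Adj (Sum.inl u) (Sum.inr p) ↔ u = p.1 := by
  simp only [attachCliques, SimpleGraph.fromRel_adj, attachRel]
  constructor
  · rintro ⟨-, h | h⟩
    · exact h
    · exact h.elim
  · intro h
    exact ⟨by simp, Or.inl h⟩

lemma attach_adj_inr_inl (u : V) (p : V × Fin (2 * C)) :
    (attachCliques G C).Adj (Sum.inr p) (Sum.inl u) ↔ u = p.1 := by
  rw [SimpleGraph.adj_comm]; exact attach_adj_inl_inr G C u p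

lemma attach_adj_inr_inr (p q : V × Fin (2 * C)) :
    (attachCliques G C).Adj (Sum.inr p) (Sum.inr q) ↔ p ≠ q ∧ p.1 = q.1 := by
  simp only [attachCliques, SimpleGraph.fromRel_adj, attachRel]
  constructor
  · rintro ⟨hne, h | h⟩
    · exact ⟨by simpa using hne, h⟩
    · exact ⟨by simpa using hne, h.symm⟩
  · rintro ⟨hne, h⟩
    exact ⟨by simpa using hne, Or.inl h⟩

end AuxAdj

section AuxK

variable {V : Type*} [DecidableEq V] {C : ℕ} {v : V}

lemma mem_Kclique_iff {x : V ⊕ V × Fin (2 * C)} :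
    x ∈ Kclique C v ↔ x = Sum.inl v ∨ ∃ i : Fin (2 * C), x = Sum.inr (v, i) := by
  simp only [Kclique, Finset.mem_insert, Finset.mem_image, Finset.mem_univ, true_and]
  constructor
  · rintro (h | ⟨i, h⟩)
    · exact Or.inl h
    · exact Or.inr ⟨i, h.symm⟩
  · rintro (h | ⟨i, h⟩)
    · exact Or.inl h
    · exact Or.inr ⟨i, h.symm⟩

lemma card_Kclique : (Kclique C v (V := V)).card = 2 * C + 1 := by
  rw [Kclique, Finset.card_insert_of_notMem (by simp), Finset.card_image_of_injective _
    (fun i j h => by simpa using h)]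
  simp

lemma Kclique_adj (G : SimpleGraph V) {x y : V ⊕ V × Fin (2 * C)}
    (hx : x ∈ Kclique C v) (hy : y ∈ Kclique C v) (hne : x ≠ y) :
    (attachCliques G C).Adj x y := by
  rw [mem_Kclique_iff] at hx hy
  rcases hx with rfl | ⟨i, rfl⟩ <;> rcases hy with rfl | ⟨j, rfl⟩
  · exact absurd rfl hne
  · rw [attach_adj_inl_inr]
  · rw [attach_adj_inr_inl]
  · rw [attach_adj_inr_inr]
    exact ⟨by simpa using hne, rfl⟩

end AuxK

/-- Propagation of a predicate along a connected induced subgraph. -/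
lemma connected_induce_prop {W : Type*} (G : SimpleGraph W) (S : Finset W)
    (hconn : (G.induce (S : Set W)).Connected) (P : W → Prop)
    (hP : ∀ x y, x ∈ S → y ∈ S → G.Adj x y → P x → P y)
    {a b : W} (ha : a ∈ S) (hb : b ∈ S) (hPa : P a) : P b := by
  obtain ⟨w⟩ := hconn.preconnected ⟨a, by simpa using ha⟩ ⟨b, by simpa using hb⟩
  have key : ∀ (x y : (S : Set W)) (w : (G.induce (S : Set W)).Walk x y), P x.1 → P y.1 := by
    intro x y w
    induction w with
    | nil => exact id
    | cons h p ih =>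
      intro hx
      rename_i u u' _
      exact ih (hP u.1 u'.1 (by simp) (by simp) h hx)
  exact key _ _ w hPa

section Bound

variable {V : Type*} [Fintype V] [DecidableEq V]

/-- The number of pendant vertices of the clique at `v` contained in `T`. -/
noncomputable def tcount (C : ℕ) (T : Finset (V ⊕ V × Fin (2 * C))) (v : V) : ℕ :=
  (T.toRight.filter fun p => p.1 = v).card

omit [Fintype V] in
lemma tcount_le (C : ℕ) (T : Finset (V ⊕ V × Fin (2 * C))) (v : V) : tcount C T v ≤ 2 * C := by
  have h : (T.toRight.filter fun p => p.1 = v).card ≤ (Finset.univ : Finset (Fin (2 * C))).card := by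
    apply Finset.card_le_card_of_injOn (fun p => p.2) (fun _ _ => Finset.mem_univ _)
    rintro ⟨a, i⟩ hp ⟨b, j⟩ hq h
    simp only [Finset.coe_filter, Set.mem_setOf_eq] at hp hq
    simp only at h
    simp [hp.2, hq.2, h]
  simpa [tcount] using h

lemma sum_tcount (C : ℕ) (T : Finset (V ⊕ V × Fin (2 * C))) :
    ∑ v : V, tcount C T v = T.toRight.card :=
  (Finset.card_eq_sum_card_fiberwise (f := Prod.fst) (t := Finset.univ)
    (fun _ _ => Finset.mem_univ _)).symm

lemma pairCount_attach_le (G : SimpleGraph V) (C : ℕ) (T : Finset (V ⊕ V × Fin (2 * C))) :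
    pairCount (attachCliques G C) T ≤
      pairCount G T.toLeft + ∑ v ∈ T.toLeft, tcount C T v
        + ∑ v : V, tcount C T v * ((if Sum.inl v ∈ T then 1 else 0) + (tcount C T v - 1)) := by
  rw [pairCount_eq_sum]
  have hT : ∑ x ∈ T, (T.filter fun y => (attachCliques G C).Adj x y).card
      = (∑ u ∈ T.toLeft, (T.filter fun y => (attachCliques G C).Adj (Sum.inl u) y).card)
        + ∑ p ∈ T.toRight, (T.filter fun y => (attachCliques G C).Adj (Sum.inr p) y).card := by
    conv_lhs => rw [← Finset.toLeft_disjSum_toRight (u := T)]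
    rw [Finset.sum_disjSum]
    simp only [Finset.toLeft_disjSum_toRight]
  rw [hT]
  have hB1 : ∑ u ∈ T.toLeft, (T.filter fun y => (attachCliques G C).Adj (Sum.inl u) y).card
      ≤ pairCount G T.toLeft + ∑ v ∈ T.toLeft, tcount C T v := by
    rw [pairCount_eq_sum, ← Finset.sum_add_distrib]
    apply Finset.sum_le_sum
    intro u hu
    have hsub : T.filter (fun y => (attachCliques G C).Adj (Sum.inl u) y)
        ⊆ ((T.toLeft.filter fun w => G.Adj u w).image Sum.inl)
          ∪ ((T.toRight.filter fun p => p.1 = u).image Sum.inr) := by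
      intro x hx
      rw [Finset.mem_filter] at hx
      obtain ⟨hxT, hadj⟩ := hx
      rcases x with w | p
      · rw [attach_adj_inl_inl] at hadj
        apply Finset.mem_union_left
        exact Finset.mem_image_of_mem _ (by simp [hxT, hadj])
      · rw [attach_adj_inl_inr] at hadj
        apply Finset.mem_union_right
        exact Finset.mem_image_of_mem _ (by simp [hxT, hadj.symm])
    calc (T.filter fun y => (attachCliques G C).Adj (Sum.inl u) y).card
        ≤ _ := Finset.card_le_card hsub
      _ ≤ ((T.toLeft.filter fun w => G.Adj u w).image Sum.inl).card
          + ((T.toRight.filter fun p => p.1 = u).image Sum.inr).card := Finset.card_union_le _ _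
      _ = (T.toLeft.filter fun w => G.Adj u w).card + tcount C T u := by
          rw [Finset.card_image_of_injective _ Sum.inl_injective,
            Finset.card_image_of_injective _ Sum.inr_injective, tcount]
  have hB2 : ∑ p ∈ T.toRight, (T.filter fun y => (attachCliques G C).Adj (Sum.inr p) y).card
      ≤ ∑ v : V, tcount C T v * ((if Sum.inl v ∈ T then 1 else 0) + (tcount C T v - 1)) := by
    have hgroup : ∑ v : V, tcount C T v * ((if Sum.inl v ∈ T then 1 else 0) + (tcount C T v - 1))
        = ∑ p ∈ T.toRight, ((if Sum.inl p.1 ∈ T then 1 else 0) + (tcount C T p.1 - 1)) := by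
      rw [← Finset.sum_fiberwise' T.toRight Prod.fst
        (fun v => (if Sum.inl v ∈ T then 1 else 0) + (tcount C T v - 1))]
      refine Finset.sum_congr rfl fun v _ => ?_
      rw [Finset.sum_const, smul_eq_mul, tcount]
    rw [hgroup]
    apply Finset.sum_le_sum
    intro p hp
    have hsub : T.filter (fun y => (attachCliques G C).Adj (Sum.inr p) y)
        ⊆ (T.filter (fun y => y = Sum.inl p.1))
          ∪ (((T.toRight.filter fun q => q.1 = p.1).erase p).image Sum.inr) := by
      intro x hx
      rw [Finset.mem_filter] at hx
      obtain ⟨hxT, hadj⟩ := hx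
      rcases x with w | q
      · rw [attach_adj_inr_inl] at hadj
        subst hadj
        exact Finset.mem_union_left _ (by simp [hxT])
      · rw [attach_adj_inr_inr] at hadj
        apply Finset.mem_union_right
        refine Finset.mem_image_of_mem _ ?_
        rw [Finset.mem_erase]
        exact ⟨fun h => hadj.1 h.symm, by simp [hxT, hadj.2.symm]⟩
    calc (T.filter fun y => (attachCliques G C).Adj (Sum.inr p) y).card
        ≤ _ := Finset.card_le_card hsub
      _ ≤ (T.filter (fun y => y = Sum.inl p.1)).card
          + (((T.toRight.filter fun q => q.1 = p.1).erase p).image Sum.inr).card :=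
            Finset.card_union_le _ _
      _ ≤ (if Sum.inl p.1 ∈ T then 1 else 0) + (tcount C T p.1 - 1) := by
          apply Nat.add_le_add
          · rw [Finset.filter_eq']
            split <;> simp
          · rw [Finset.card_image_of_injective _ Sum.inr_injective, tcount]
            exact le_of_eq (Finset.card_erase_of_mem (Finset.mem_filter.mpr ⟨hp, rfl⟩))
  omega

lemma pairCount_attach_le' (G : SimpleGraph V) (C : ℕ) (T : Finset (V ⊕ V × Fin (2 * C))) :
    pairCount (attachCliques G C) T ≤
      pairCount G T.toLeft + (2 * C + 1) * T.toRight.card := by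
  have h := pairCount_attach_le G C T
  have h1 : ∑ v ∈ T.toLeft, tcount C T v ≤ T.toRight.card := by
    rw [← sum_tcount C T]
    exact Finset.sum_le_sum_of_subset (Finset.subset_univ _)
  have h2 : ∑ v : V, tcount C T v * ((if Sum.inl v ∈ T then 1 else 0) + (tcount C T v - 1))
      ≤ 2 * C * T.toRight.card := by
    calc ∑ v : V, tcount C T v * ((if Sum.inl v ∈ T then 1 else 0) + (tcount C T v - 1))
        ≤ ∑ v : V, tcount C T v * (2 * C) := by
          apply Finset.sum_le_sum
          intro v _
          have ht := tcount_le C T v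
          rcases Nat.eq_zero_or_pos (tcount C T v) with h0 | h0
          · simp [h0]
          · apply Nat.mul_le_mul_left
            have : (if Sum.inl v ∈ T then 1 else 0) ≤ 1 := by split <;> omega
            omega
      _ = 2 * C * T.toRight.card := by
          rw [← Finset.sum_mul, sum_tcount, mul_comm]
  have hsplit : (2 * C + 1) * T.toRight.card = 2 * C * T.toRight.card + T.toRight.card := by ring
  omega

lemma pairCount_attach_le_empty (G : SimpleGraph V) (C : ℕ)
    (T : Finset (V ⊕ V × Fin (2 * C))) (hA : T.toLeft = ∅) (hC : 1 ≤ C) :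
    pairCount (attachCliques G C) T ≤ (2 * C - 1) * T.toRight.card := by
  have h := pairCount_attach_le G C T
  rw [hA] at h
  have hpc : pairCount G (∅ : Finset V) = 0 := by
    simp [pairCount]
  rw [hpc, Finset.sum_empty] at h
  have h2 : ∑ v : V, tcount C T v * ((if Sum.inl v ∈ T then 1 else 0) + (tcount C T v - 1))
      ≤ (2 * C - 1) * T.toRight.card := by
    calc ∑ v : V, tcount C T v * ((if Sum.inl v ∈ T then 1 else 0) + (tcount C T v - 1))
        ≤ ∑ v : V, tcount C T v * (2 * C - 1) := by
          apply Finset.sum_le_sum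
          intro v _
          have ht := tcount_le C T v
          have hv0 : Sum.inl v ∉ T := by
            intro hv
            have : v ∈ T.toLeft := Finset.mem_toLeft.mpr hv
            simp [hA] at this
          rw [if_neg hv0]
          apply Nat.mul_le_mul_left
          omega
      _ = (2 * C - 1) * T.toRight.card := by
          rw [← Finset.sum_mul, sum_tcount, mul_comm]
  omega

/-- The key density bound: every nonempty subset of `G_C` has density `< C + 1/2`. -/
lemma density_attach_lt (G : SimpleGraph V) (C : ℕ) (hC : 1 ≤ C) (ρG : ℝ)
    (hub : ∀ x ∈ densitySet G, x ≤ ρG) (hlt : ρG < (C : ℝ) + 1 / 2)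
    (T : Finset (V ⊕ V × Fin (2 * C))) (hTne : T.Nonempty) :
    density (attachCliques G C) T < (C : ℝ) + 1 / 2 := by
  have hTpos : (0 : ℝ) < T.card := by
    exact_mod_cast Finset.card_pos.mpr hTne
  rw [density, div_lt_iff₀ hTpos]
  have h2e : (2 : ℝ) * eIn (attachCliques G C) T = pairCount (attachCliques G C) T := by
    exact_mod_cast congrArg (Nat.cast (R := ℝ)) (pairCount_two_eIn (attachCliques G C) T)
  have hcard : (T.toLeft.card : ℝ) + T.toRight.card = T.card := by
    exact_mod_cast congrArg (Nat.cast (R := ℝ)) (Finset.card_toLeft_add_card_toRight (u := T))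
  have key : (pairCount (attachCliques G C) T : ℝ) < (2 * C + 1) * T.card := by
    by_cases hA : T.toLeft.Nonempty
    · have hApos : (0 : ℝ) < T.toLeft.card := by
        exact_mod_cast Finset.card_pos.mpr hA
      have hGA : (pairCount G T.toLeft : ℝ) ≤ 2 * ρG * T.toLeft.card := by
        have hdens : density G T.toLeft ≤ ρG := hub _ ⟨T.toLeft, hA, rfl⟩
        rw [density, div_le_iff₀ hApos] at hdens
        have h2 : (2 : ℝ) * eIn G T.toLeft = pairCount G T.toLeft := by
          exact_mod_cast congrArg (Nat.cast (R := ℝ)) (pairCount_two_eIn G T.toLeft)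
        nlinarith
      have hle : (pairCount (attachCliques G C) T : ℝ)
          ≤ pairCount G T.toLeft + (2 * C + 1) * T.toRight.card := by
        have := pairCount_attach_le' G C T
        push_cast [← Nat.cast_le (α := ℝ)] at this ⊢
        exact_mod_cast this
      have hBnn : (0 : ℝ) ≤ T.toRight.card := by positivity
      nlinarith
    · have hA' : T.toLeft = ∅ := Finset.not_nonempty_iff_eq_empty.mp hA
      have hle := pairCount_attach_le_empty G C T hA' hC
      have hBcard : (T.toRight.card : ℝ) = T.card := by
        rw [← hcard, hA']
        simp
      have hle' : (pairCount (attachCliques G C) T : ℝ) ≤ (2 * C - 1) * T.toRight.card := by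
        have h1 : ((2 * C - 1 : ℕ) : ℝ) = 2 * C - 1 := by
          have : 1 ≤ 2 * C := by omega
          push_cast [this]
          ring
        calc (pairCount (attachCliques G C) T : ℝ) ≤ ((2 * C - 1) * T.toRight.card : ℕ) := by
              exact_mod_cast hle
          _ = (2 * C - 1) * T.toRight.card := by rw [Nat.cast_mul, h1]
      rw [hBcard] at hle'
      nlinarith
  nlinarith

end Bound

/-- If `ρ(G) < C + 1/2` and `S` is a nonempty, connected set of vertices of `G_C`
attaining the maximum subgraph density of `G_C`, then every attached clique `K_v`
intersected by `S` is fully contained in `S`. -/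
theorem attachCliques_maximizer_contains_cliques {V : Type*} [Fintype V] [DecidableEq V]
    [Nonempty V] (C : ℕ) (hC : 1 ≤ C) (G : SimpleGraph V) (ρG ρ : ℝ)
    (hmaxG : IsGreatest (densitySet G) ρG)
    (hlt : ρG < (C : ℝ) + 1 / 2)
    (hmaxC : IsGreatest (densitySet (attachCliques G C)) ρ)
    (S : Finset (V ⊕ V × Fin (2 * C))) (hSne : S.Nonempty)
    (hconn : ((attachCliques G C).induce (S : Set (V ⊕ V × Fin (2 * C)))).Connected)
    (hSρ : density (attachCliques G C) S = ρ) :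
    ∀ v : V, (S ∩ Kclique C v).Nonempty → Kclique C v ⊆ S := by
  intro v hint
  by_contra hnot
  obtain ⟨x, hxK, hxS⟩ := Finset.not_subset.mp hnot
  -- basic facts about ρ
  have hSpos : (0 : ℝ) < S.card := by exact_mod_cast Finset.card_pos.mpr hSne
  have hρlt : ρ < (C : ℝ) + 1 / 2 := by
    rw [← hSρ]
    exact density_attach_lt G C hC ρG hmaxG.2 hlt S hSne
  have hρS : (eIn (attachCliques G C) S : ℝ) = ρ * S.card := by
    rw [← hSρ, density]
    field_simp
  have hCρ : (C : ℝ) ≤ ρ := by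
    apply hmaxC.2
    refine ⟨Kclique C v, ⟨Sum.inl v, by rw [mem_Kclique_iff]; exact Or.inl rfl⟩, ?_⟩
    have hpcK : pairCount (attachCliques G C) (Kclique C v) = 2 * ((2 * C + 1) * C) := by
      rw [pairCount_of_clique _ _ (fun a ha b hb hne => Kclique_adj G ha hb hne), card_Kclique]
      have : (2 * C + 1) * (2 * C + 1) = 2 * ((2 * C + 1) * C) + (2 * C + 1) := by ring
      omega
    have heK : eIn (attachCliques G C) (Kclique C v) = (2 * C + 1) * C := by
      have := pairCount_two_eIn (attachCliques G C) (Kclique C v)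
      omega
    rw [density, heK, card_Kclique]
    push_cast
    field_simp
  by_cases hv : Sum.inl v ∈ S
  · -- Case B : the base vertex is in S; add the missing clique vertices
    set K := Kclique C v with hK
    set M := K \ S with hM
    have hMne : M.Nonempty := ⟨x, Finset.mem_sdiff.mpr ⟨hxK, hxS⟩⟩
    have hdisj : Disjoint S M := Finset.sdiff_disjoint.symm
    set T := S ∪ M with hTdef
    have hTcard : T.card = S.card + M.card := Finset.card_union_of_disjoint hdisj
    have haK : (K ∩ S).card + M.card = 2 * C + 1 := by
      rw [hM, Finset.card_inter_add_card_sdiff, hK, card_Kclique]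
    have hapos : 1 ≤ (K ∩ S).card :=
      Finset.card_pos.mpr ⟨Sum.inl v, Finset.mem_inter.mpr ⟨by rw [hK, mem_Kclique_iff]; exact Or.inl rfl, hv⟩⟩
    have hmle : M.card ≤ 2 * C := by omega
    have hm1 : 1 ≤ M.card := Finset.card_pos.mpr hMne
    -- pairCount lower bound for T
    have hMK : M ⊆ K := Finset.sdiff_subset
    have hMS : ∀ z ∈ M, z ∉ S := fun z hz => (Finset.mem_sdiff.mp hz).2
    have hKS : K ∩ S ⊆ S := Finset.inter_subset_right
    set GC := attachCliques G C with hGC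
    set X0 := (S ×ˢ S).filter (fun p => GC.Adj p.1 p.2) with hX0
    set X1 := M ×ˢ (K ∩ S) with hX1
    set X2 := (K ∩ S) ×ˢ M with hX2
    set X3 := M.offDiag with hX3
    have hsub : X0 ∪ X1 ∪ X2 ∪ X3 ⊆ (T ×ˢ T).filter (fun p => GC.Adj p.1 p.2) := by
      intro p hp
      simp only [Finset.mem_union] at hp
      rw [Finset.mem_filter, Finset.mem_product]
      rcases hp with ((hp | hp) | hp) | hp
      · rw [hX0, Finset.mem_filter, Finset.mem_product] at hp
        exact ⟨⟨Finset.mem_union_left _ hp.1.1, Finset.mem_union_left _ hp.1.2⟩, hp.2⟩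
      · rw [hX1, Finset.mem_product] at hp
        refine ⟨⟨Finset.mem_union_right _ hp.1, Finset.mem_union_left _ (hKS hp.2)⟩, ?_⟩
        apply Kclique_adj G (hMK hp.1) (Finset.inter_subset_left hp.2)
        intro h
        exact hMS _ hp.1 (h ▸ hKS hp.2)
      · rw [hX2, Finset.mem_product] at hp
        refine ⟨⟨Finset.mem_union_left _ (hKS hp.1), Finset.mem_union_right _ hp.2⟩, ?_⟩
        apply Kclique_adj G (Finset.inter_subset_left hp.1) (hMK hp.2)
        intro h
        exact hMS _ hp.2 (h ▸ hKS hp.1)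
      · rw [hX3, Finset.mem_offDiag] at hp
        exact ⟨⟨Finset.mem_union_right _ hp.1, Finset.mem_union_right _ hp.2.1⟩,
          Kclique_adj G (hMK hp.1) (hMK hp.2.1) hp.2.2⟩
    have hd01 : Disjoint X0 X1 := by
      rw [Finset.disjoint_left]
      intro p hp0 hp1
      rw [hX0, Finset.mem_filter, Finset.mem_product] at hp0
      rw [hX1, Finset.mem_product] at hp1
      exact hMS _ hp1.1 hp0.1.1
    have hd012 : Disjoint (X0 ∪ X1) X2 := by
      rw [Finset.disjoint_left]
      intro p hp hp2
      rw [hX2, Finset.mem_product] at hp2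
      rcases Finset.mem_union.mp hp with hp0 | hp1
      · rw [hX0, Finset.mem_filter, Finset.mem_product] at hp0
        exact hMS _ hp2.2 hp0.1.2
      · rw [hX1, Finset.mem_product] at hp1
        exact hMS _ hp1.1 (hKS hp2.1)
    have hd0123 : Disjoint (X0 ∪ X1 ∪ X2) X3 := by
      rw [Finset.disjoint_left]
      intro p hp hp3
      rw [hX3, Finset.mem_offDiag] at hp3
      rcases Finset.mem_union.mp hp with hp' | hp2
      · rcases Finset.mem_union.mp hp' with hp0 | hp1
        · rw [hX0, Finset.mem_filter, Finset.mem_product] at hp0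
          exact hMS _ hp3.1 hp0.1.1
        · rw [hX1, Finset.mem_product] at hp1
          exact hMS _ hp3.2.1 (hKS hp1.2)
      · rw [hX2, Finset.mem_product] at hp2
        exact hMS _ hp3.1 (hKS hp2.1)
    have hcardunion : (X0 ∪ X1 ∪ X2 ∪ X3).card = X0.card + X1.card + X2.card + X3.card := by
      rw [Finset.card_union_of_disjoint hd0123, Finset.card_union_of_disjoint hd012,
        Finset.card_union_of_disjoint hd01]
    have hpcT : pairCount GC S + M.card * (K ∩ S).card + (K ∩ S).card * M.card
        + (M.card * M.card - M.card) ≤ pairCount GC T := by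
      have := Finset.card_le_card hsub
      rw [hcardunion] at this
      rw [hX1, hX2, hX3, Finset.card_product, Finset.card_product, Finset.offDiag_card] at this
      exact this
    -- real arithmetic
    have hTne : T.Nonempty := hSne.mono Finset.subset_union_left
    have hdT : density GC T ≤ ρ := hmaxC.2 ⟨T, hTne, rfl⟩
    have hTpos : (0 : ℝ) < T.card := by exact_mod_cast Finset.card_pos.mpr hTne
    rw [density, div_le_iff₀ hTpos] at hdT
    have h2eT : (2 : ℝ) * eIn GC T = pairCount GC T := by
      exact_mod_cast congrArg (Nat.cast (R := ℝ)) (pairCount_two_eIn GC T)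
    have h2eS : (2 : ℝ) * eIn GC S = pairCount GC S := by
      exact_mod_cast congrArg (Nat.cast (R := ℝ)) (pairCount_two_eIn GC S)
    have hmm : M.card ≤ M.card * M.card := Nat.le_mul_of_pos_left _ hm1
    have hpcTR : (pairCount GC S : ℝ) + M.card * (K ∩ S).card + (K ∩ S).card * M.card
        + (M.card * M.card - (M.card : ℝ)) ≤ pairCount GC T := by
      have := hpcT
      have hcast : ((pairCount GC S + M.card * (K ∩ S).card + (K ∩ S).card * M.card
          + (M.card * M.card - M.card) : ℕ) : ℝ)
          = (pairCount GC S : ℝ) + M.card * (K ∩ S).card + (K ∩ S).card * M.card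
            + (M.card * M.card - (M.card : ℝ)) := by
        push_cast [Nat.cast_sub hmm]
        try ring
      calc (pairCount GC S : ℝ) + M.card * (K ∩ S).card + (K ∩ S).card * M.card
          + (M.card * M.card - (M.card : ℝ)) = _ := hcast.symm
        _ ≤ (pairCount GC T : ℝ) := by exact_mod_cast this
    have hTcardR : (T.card : ℝ) = S.card + M.card := by exact_mod_cast hTcard
    have haR : ((K ∩ S).card : ℝ) + M.card = 2 * C + 1 := by exact_mod_cast haK
    have hmR1 : (1 : ℝ) ≤ M.card := by exact_mod_cast hm1
    have hmRle : (M.card : ℝ) ≤ 2 * C := by exact_mod_cast hmle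
    nlinarith [hdT, hpcTR, h2eT, h2eS, hρS, hρlt, hmR1, hmRle, haR, hTcardR,
      mul_nonneg (le_of_lt (lt_of_lt_of_le zero_lt_one hmR1)) (sub_nonneg.mpr hmRle)]
  · -- Case A : the base vertex is not in S
    obtain ⟨y, hy⟩ := hint
    obtain ⟨hyS, hyK⟩ := Finset.mem_inter.mp hy
    have hyne : y ≠ Sum.inl v := fun h => hv (h ▸ hyS)
    rw [mem_Kclique_iff] at hyK
    obtain ⟨i, rfl⟩ : ∃ i, y = Sum.inr (v, i) := by
      rcases hyK with h | h
      · exact absurd h hyne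
      · exact h
    set GC := attachCliques G C with hGC
    have hprop : ∀ z ∈ S, ∃ j : Fin (2 * C), z = Sum.inr (v, j) := by
      intro z hz
      apply connected_induce_prop GC S hconn (fun w => ∃ j : Fin (2 * C), w = Sum.inr (v, j))
        ?_ hyS hz ⟨i, rfl⟩
      rintro a b haS hbS hadj ⟨j, rfl⟩
      rcases b with u | q
      · rw [hGC, attach_adj_inr_inl] at hadj
        simp only at hadj
        exact absurd (hadj ▸ hbS) hv
      · rw [hGC, attach_adj_inr_inr] at hadj
        obtain ⟨q1, q2⟩ := q
        obtain ⟨-, h1⟩ := hadj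
        simp only at h1
        exact ⟨q2, by rw [← h1]⟩
    have hclique : ∀ a ∈ S, ∀ b ∈ S, a ≠ b → GC.Adj a b := by
      intro a ha b hb hne
      obtain ⟨ja, rfl⟩ := hprop a ha
      obtain ⟨jb, rfl⟩ := hprop b hb
      rw [hGC, attach_adj_inr_inr]
      exact ⟨by simpa using hne, rfl⟩
    have hpcS : pairCount GC S = S.card * S.card - S.card := pairCount_of_clique _ _ hclique
    have hcardle : S.card ≤ 2 * C := by
      have hsub : S ⊆ Finset.univ.image (fun j : Fin (2 * C) => (Sum.inr (v, j) : V ⊕ V × Fin (2 * C))) := by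
        intro z hz
        obtain ⟨j, rfl⟩ := hprop z hz
        exact Finset.mem_image_of_mem _ (Finset.mem_univ j)
      calc S.card ≤ _ := Finset.card_le_card hsub
        _ ≤ (Finset.univ : Finset (Fin (2 * C))).card := Finset.card_image_le
        _ = 2 * C := by simp
    have h2eS : (2 : ℝ) * eIn GC S = pairCount GC S := by
      exact_mod_cast congrArg (Nat.cast (R := ℝ)) (pairCount_two_eIn GC S)
    have hnn : S.card ≤ S.card * S.card := Nat.le_mul_of_pos_left _ (Finset.card_pos.mpr hSne)
    have hpcSR : (pairCount GC S : ℝ) = S.card * S.card - (S.card : ℝ) := by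
      rw [hpcS]
      push_cast [Nat.cast_sub hnn]
      ring
    have hcardleR : (S.card : ℝ) ≤ 2 * C := by exact_mod_cast hcardle
    nlinarith [h2eS, hρS, hCρ, hpcSR, hSpos, hcardleR]
end
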